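/- arXiv:1805.07450 — 8 statements merged into one kernel-verified Lean document; each statement's English description precedes it below -/
import Mathlib

section
/- Let G = (V, E) be a complete 3-tree on a finite vertex set V with |V| ≥ 3, let the edge set be partitioned as E = H ∪ F with H ∩ F = ∅, fix lengths l_H : H → ℝ≥0, fix an edge f₀ ∈ F, and fix lengths l : (F \ {f₀}) → ℝ≥0 on all other edges of F. Then the set of values t ∈ ℝ≥0 for which there exists a map p : V → EuclideanSpace ℝ (Fin 3) satisfying dist (p u) (p v) = l_H e for every edge e = {u,v} ∈ H, dist (p u) (p v) = l f for every edge f = {u,v} ∈ F \ {f₀}, and dist (p u) (p v) = t for f₀ = {u,v}, is an interval (a convex subset of ℝ). -/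
/-!
Squared lengths interpolate linearly: if `p₁` and `p₂` realize the constraints with `f₀`-lengths
`t₁ ≤ t₂`, and `t ^ 2 = μ t₁ ^ 2 + ν t₂ ^ 2` with `μ + ν = 1`, then `x ↦ (√μ • p₁ x, √ν • p₂ x)`
realizes them in `ℝ³ × ℝ³` with `f₀`-length `t`. The 3-tree ordering brings this realization back
to `ℝ³`: every new vertex is attached to a triangle that is already placed congruently, and a point
at prescribed distances from the vertices of a triangle can always be found in `ℝ³`.
-/

open scoped NNReal

def IsComplete3Tree {V : Type*} [Fintype V] (G : SimpleGraph V) : Prop :=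
  ∃ (n : ℕ) (_ : 3 ≤ n) (v : Fin n ≃ V),
    (∀ i j : Fin n, i.val < 3 → j.val < 3 → i ≠ j → G.Adj (v i) (v j)) ∧
    ∀ i : Fin n, 3 ≤ i.val →
      ∃ N : Finset (Fin n), N.card = 3 ∧ (∀ j ∈ N, j < i) ∧
        (∀ j : Fin n, j < i → (G.Adj (v i) (v j) ↔ j ∈ N)) ∧
        (∀ j ∈ N, ∀ k ∈ N, j ≠ k → G.Adj (v j) (v k))

open scoped RealInnerProductSpace
open Module

section Realization

variable {E F : Type*} [NormedAddCommGroup E] [InnerProductSpace ℝ E]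
  [NormedAddCommGroup F] [InnerProductSpace ℝ F]

theorem inner_eq_of_norm_eq {p q : F} {p' q' : E} (hp : ‖p‖ = ‖p'‖) (hq : ‖q‖ = ‖q'‖)
    (hpq : ‖p - q‖ = ‖p' - q'‖) : ⟪p, q⟫ = ⟪p', q'⟫ := by
  have h := congrArg (· ^ 2) hpq
  simp only [norm_sub_sq_real, hp, hq] at h
  linarith

theorem norm_sub_eq_of_inner_eq {p q : F} {p' q' : E} (hp : ‖p‖ = ‖p'‖) (hq : ‖q‖ = ‖q'‖)
    (hpq : ⟪p, q⟫ = ⟪p', q'⟫) : ‖p - q‖ = ‖p' - q'‖ := by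
  rw [← sq_eq_sq₀ (norm_nonneg _) (norm_nonneg _), norm_sub_sq_real, norm_sub_sq_real, hp, hq, hpq]

theorem inner_sum_smul_eq_of_inner_eq {ι : Type*} [Fintype ι] {u : ι → F} {w : ι → E}
    (huw : ∀ i j, ⟪u i, u j⟫ = ⟪w i, w j⟫) (c : ι → ℝ) (j : ι) :
    ⟪u j, ∑ i, c i • u i⟫ = ⟪w j, ∑ i, c i • w i⟫ := by
  simp only [inner_sum, real_inner_smul_right, huw]

theorem norm_sum_smul_eq_of_inner_eq {ι : Type*} [Fintype ι] {u : ι → F} {w : ι → E}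
    (huw : ∀ i j, ⟪u i, u j⟫ = ⟪w i, w j⟫) (c : ι → ℝ) :
    ‖∑ i, c i • u i‖ = ‖∑ i, c i • w i‖ := by
  rw [← sq_eq_sq₀ (norm_nonneg _) (norm_nonneg _), ← real_inner_self_eq_norm_sq,
    ← real_inner_self_eq_norm_sq]
  simp only [sum_inner, real_inner_smul_left, inner_sum_smul_eq_of_inner_eq huw]

theorem exists_inner_eq_of_inner_eq [FiniteDimensional ℝ F] {ι : Type*} [Fintype ι]
    (hcard : Fintype.card ι < finrank ℝ F) {u : ι → F} {w : ι → E}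
    (huw : ∀ i j, ⟪u i, u j⟫ = ⟪w i, w j⟫) (y : E) :
    ∃ x : F, ‖x‖ = ‖y‖ ∧ ∀ i, ⟪u i, x⟫ = ⟪w i, y⟫ := by
  -- Copy the projection of `y` onto `span (range w)` through the Gram data, and replace the
  -- orthogonal remainder `r` by a vector of the same length orthogonal to every `u i`.
  set K := Submodule.span ℝ (Set.range w)
  have : FiniteDimensional ℝ K := FiniteDimensional.span_of_finite ℝ (Set.finite_range w)
  obtain ⟨y₀, hy₀, r, hr, rfl⟩ := K.exists_add_mem_mem_orthogonal y
  obtain ⟨c, rfl⟩ := (Submodule.mem_span_range_iff_exists_fun ℝ).mp hy₀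
  set L := Submodule.span ℝ (Set.range u)
  have : Nontrivial Lᗮ := by
    rw [← finrank_pos_iff (R := ℝ)]
    have := L.finrank_add_finrank_orthogonal
    have : finrank ℝ L ≤ Fintype.card ι := finrank_range_le_card u
    omega
  obtain ⟨e, he⟩ := exists_norm_eq Lᗮ (norm_nonneg r)
  replace he : ‖(e : F)‖ = ‖r‖ := he
  have hu : ∀ i, u i ∈ L := fun i => Submodule.subset_span ⟨i, rfl⟩
  have hw : ∀ i, w i ∈ K := fun i => Submodule.subset_span ⟨i, rfl⟩
  refine ⟨∑ i, c i • u i + e, ?_, fun j => ?_⟩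
  · rw [← sq_eq_sq₀ (norm_nonneg _) (norm_nonneg _), sq, sq,
      norm_add_sq_eq_norm_sq_add_norm_sq_real, norm_add_sq_eq_norm_sq_add_norm_sq_real,
      norm_sum_smul_eq_of_inner_eq huw, he]
    · exact K.inner_right_of_mem_orthogonal hy₀ hr
    · exact L.inner_right_of_mem_orthogonal
        ((Submodule.mem_span_range_iff_exists_fun ℝ).mpr ⟨c, rfl⟩) e.2
  · rw [inner_add_right, inner_add_right, inner_sum_smul_eq_of_inner_eq huw,
      L.inner_right_of_mem_orthogonal (hu j) e.2, K.inner_right_of_mem_orthogonal (hw j) hr]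

theorem exists_dist_eq_of_dist_eq [FiniteDimensional ℝ F] {ι : Type*} [Fintype ι]
    (hcard : Fintype.card ι ≤ finrank ℝ F) {a : ι → F} {b : ι → E}
    (hab : ∀ i j, dist (a i) (a j) = dist (b i) (b j)) (y : E) :
    ∃ x : F, ∀ i, dist (a i) x = dist (b i) y := by
  classical
  obtain _ | ⟨⟨i₀⟩⟩ := isEmpty_or_nonempty ι
  · exact ⟨0, isEmptyElim⟩
  have hnorm : ∀ i, ‖a i - a i₀‖ = ‖b i - b i₀‖ := fun i => by
    rw [← dist_eq_norm, ← dist_eq_norm, hab]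
  obtain ⟨x, hx, hxi⟩ := exists_inner_eq_of_inner_eq
    ((Fintype.card_subtype_lt (p := (· ≠ i₀)) (not_not.mpr rfl)).trans_le hcard)
    (u := fun i => a i - a i₀) (w := fun i => b i - b i₀)
    (fun i j => inner_eq_of_norm_eq (hnorm i) (hnorm j) (by
      rw [sub_sub_sub_cancel_right, sub_sub_sub_cancel_right, ← dist_eq_norm, ← dist_eq_norm, hab]))
    (y - b i₀)
  have hinner : ∀ i, ⟪a i - a i₀, x⟫ = ⟪b i - b i₀, y - b i₀⟫ := fun i => by
    by_cases hi : i = i₀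
    · simp [hi]
    · exact hxi ⟨i, hi⟩
  refine ⟨x + a i₀, fun i => ?_⟩
  rw [dist_eq_norm, dist_eq_norm, ← sub_sub_sub_cancel_right (b i) y (b i₀),
    sub_add_eq_sub_sub_swap]
  exact norm_sub_eq_of_inner_eq (hnorm i) hx (hinner i)

theorem dist_sqrt_smul_prod_eq {μ ν c : ℝ} (hμ : 0 ≤ μ) (hν : 0 ≤ ν) (hc : 0 ≤ c)
    {x x' : E} {y y' : F} (h : μ * dist x x' ^ 2 + ν * dist y y' ^ 2 = c ^ 2) :
    dist (WithLp.toLp 2 (√μ • x, √ν • y)) (WithLp.toLp 2 (√μ • x', √ν • y')) = c := by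
  rw [← sq_eq_sq₀ dist_nonneg hc, ← h, dist_eq_norm, WithLp.prod_norm_sq_eq_of_L2]
  simp [← smul_sub, norm_smul, mul_pow, hμ, hν, dist_eq_norm]

variable {V : Type*} {G : SimpleGraph V}

/-- A reversed perfect elimination ordering of width `k`. -/
def SimpleGraph.IsEliminationOrdering (G : SimpleGraph V) (k : ℕ) {n : ℕ} (v : Fin n ≃ V) : Prop :=
  ∀ i : Fin n, ∃ N : Finset V, N.card ≤ k ∧ G.IsClique (N : Set V) ∧
    ∀ y, y ∈ N ↔ v.symm y < i ∧ G.Adj (v i) y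

theorem exists_dist_eq_on_insert [FiniteDimensional ℝ F] {S : Set V} {x : V} (hx : x ∉ S)
    {N : Finset V} (hcard : N.card ≤ finrank ℝ F) (hN : G.IsClique (N : Set V))
    (hNS : ∀ y ∈ N, y ∈ S) (hxN : ∀ y ∈ S, G.Adj x y → y ∈ N) (p : V → E) {q : V → F}
    (hq : ∀ y ∈ S, ∀ z ∈ S, G.Adj y z → dist (q y) (q z) = dist (p y) (p z)) :
    ∃ q' : V → F, ∀ y ∈ insert x S, ∀ z ∈ insert x S, G.Adj y z →
      dist (q' y) (q' z) = dist (p y) (p z) := by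
  classical
  have hdist : ∀ y z : N, dist (q y) (q z) = dist (p y) (p z) := by
    rintro ⟨y, hy⟩ ⟨z, hz⟩
    by_cases hyz : y = z
    · simp [hyz]
    · exact hq y (hNS y hy) z (hNS z hz) (hN hy hz hyz)
  obtain ⟨ξ, hξ⟩ := exists_dist_eq_of_dist_eq (ι := N) (by simpa using hcard) hdist (p x)
  have hnew : ∀ z ∈ S, G.Adj x z →
      dist (Function.update q x ξ x) (Function.update q x ξ z) = dist (p x) (p z) := by
    intro z hz hxz
    rw [Function.update_self, Function.update_of_ne (ne_of_mem_of_not_mem hz hx), dist_comm,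
      dist_comm (p x)]
    exact hξ ⟨z, hxN z hz hxz⟩
  refine ⟨Function.update q x ξ, ?_⟩
  rintro y (rfl | hy) z (rfl | hz) hyz
  · exact absurd hyz G.irrefl
  · exact hnew z hz hyz
  · rw [dist_comm, dist_comm (p y)]
    exact hnew y hy hyz.symm
  · rw [Function.update_of_ne (ne_of_mem_of_not_mem hy hx),
      Function.update_of_ne (ne_of_mem_of_not_mem hz hx)]
    exact hq y hy z hz hyz

theorem exists_dist_eq_of_isEliminationOrdering [FiniteDimensional ℝ F] {k n : ℕ} {v : Fin n ≃ V}
    (hv : G.IsEliminationOrdering k v) (hk : k ≤ finrank ℝ F) (p : V → E) :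
    ∃ q : V → F, ∀ x y, G.Adj x y → dist (q x) (q y) = dist (p x) (p y) := by
  suffices ∀ m ≤ n, ∃ q : V → F, ∀ x ∈ {x | (v.symm x : ℕ) < m}, ∀ y ∈ {y | (v.symm y : ℕ) < m},
      G.Adj x y → dist (q x) (q y) = dist (p x) (p y) by
    obtain ⟨q, hq⟩ := this n le_rfl
    exact ⟨q, fun x y => hq x (v.symm x).2 y (v.symm y).2⟩
  intro m
  induction m with
  | zero => exact fun _ => ⟨0, fun x hx => absurd hx (Nat.not_lt_zero _)⟩
  | succ m ih =>
    intro hm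
    obtain ⟨q, hq⟩ := ih (by omega)
    set i : Fin n := ⟨m, hm⟩
    obtain ⟨N, hcard, hN, hmem⟩ := hv i
    have hinsert : {x | (v.symm x : ℕ) < m + 1} = insert (v i) {x | (v.symm x : ℕ) < m} := by
      ext x
      simp only [Set.mem_ofPred_eq, Set.mem_insert_iff, ← Equiv.symm_apply_eq, Fin.ext_iff, i]
      omega
    rw [hinsert]
    exact exists_dist_eq_on_insert (by simp [i] : v i ∉ {x | (v.symm x : ℕ) < m})
      (hcard.trans hk) hN (fun y hy => ((hmem y).mp hy).1)
      (fun y hy hxy => (hmem y).mpr ⟨hy, hxy⟩) p hq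

theorem IsComplete3Tree.exists_isEliminationOrdering [Fintype V] (hG : IsComplete3Tree G) :
    ∃ (n : ℕ) (v : Fin n ≃ V), G.IsEliminationOrdering 3 v := by
  obtain ⟨n, -, v, hbase, hstep⟩ := hG
  refine ⟨n, v, fun i => ?_⟩
  rcases lt_or_ge i.val 3 with hi | hi
  · refine ⟨(Finset.Iio i).map v.toEmbedding, by simp; omega, ?_, fun y => ?_⟩
    · simp only [Finset.coe_map, Equiv.coe_toEmbedding, Finset.coe_Iio]
      rintro _ ⟨j, hj, rfl⟩ _ ⟨k, hk, rfl⟩ hjk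
      exact hbase j k (by simp at hj; omega) (by simp at hk; omega) (ne_of_apply_ne v hjk)
    · simp only [Finset.mem_map_equiv, Finset.mem_Iio, iff_self_and]
      intro hy
      simpa using hbase i _ hi (by omega) (ne_of_gt hy)
  · obtain ⟨N, hcard, hlt, hadj, hclique⟩ := hstep i hi
    refine ⟨N.map v.toEmbedding, by simp [hcard], ?_, fun y => ?_⟩
    · simp only [Finset.coe_map, Equiv.coe_toEmbedding]
      rintro _ ⟨j, hj, rfl⟩ _ ⟨k, hk, rfl⟩ hjk
      exact hclique j hj k hk (ne_of_apply_ne v hjk)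
    · rw [Finset.mem_map_equiv]
      exact ⟨fun hy => ⟨hlt _ hy, by simpa using (hadj _ (hlt _ hy)).mpr hy⟩,
        fun ⟨hy, hadjy⟩ => (hadj _ hy).mp (by simpa using hadjy)⟩

end Realization

theorem cayley_single_parameter_interval_general
    {V : Type*} [Fintype V] (G : SimpleGraph V)
    (hG : IsComplete3Tree G)
    (H F : Set (Sym2 V)) (hunion : H ∪ F = G.edgeSet)
    (lH : H → ℝ≥0) (f₀ : Sym2 V) (hf₀ : f₀ ∈ F)
    (l : (F \ {f₀} : Set (Sym2 V)) → ℝ≥0) :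
    Convex ℝ {t : ℝ |
      0 ≤ t ∧
      ∃ p : V → EuclideanSpace ℝ (Fin 3),
        (∀ (x y : V) (h : s(x, y) ∈ H),
          dist (p x) (p y) = (lH ⟨s(x, y), h⟩ : ℝ)) ∧
        (∀ (x y : V) (h : s(x, y) ∈ (F \ {f₀} : Set (Sym2 V))),
          dist (p x) (p y) = (l ⟨s(x, y), h⟩ : ℝ)) ∧
        (∀ x y : V, s(x, y) = f₀ → dist (p x) (p y) = t)} := by
  rw [convex_iff_ordConnected]
  refine ⟨fun t₁ ⟨ht₁, p₁, h₁H, h₁F, h₁f⟩ t₂ ⟨_, p₂, h₂H, h₂F, h₂f⟩ t ⟨h₁t, ht₂⟩ => ?_⟩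
  have ht : 0 ≤ t := ht₁.trans h₁t
  obtain ⟨μ, ν, hμ, hν, hμν, hμν_sq⟩ : ∃ μ ν : ℝ, 0 ≤ μ ∧ 0 ≤ ν ∧ μ + ν = 1 ∧
      μ • t₁ ^ 2 + ν • t₂ ^ 2 = t ^ 2 :=
    Icc_subset_segment ⟨pow_le_pow_left₀ ht₁ h₁t 2, pow_le_pow_left₀ ht ht₂ 2⟩
  obtain ⟨n, v, hv⟩ := hG.exists_isEliminationOrdering
  obtain ⟨p, hp⟩ := exists_dist_eq_of_isEliminationOrdering hv finrank_euclideanSpace_fin.ge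
    fun x => WithLp.toLp 2 (√μ • p₁ x, √ν • p₂ x)
  have hedge : ∀ {x y} (c : ℝ), 0 ≤ c → s(x, y) ∈ H ∪ F →
      μ * dist (p₁ x) (p₁ y) ^ 2 + ν * dist (p₂ x) (p₂ y) ^ 2 = c ^ 2 → dist (p x) (p y) = c :=
    fun c hc hxy h => (hp _ _ (by rwa [hunion] at hxy)).trans (dist_sqrt_smul_prod_eq hμ hν hc h)
  have hfixed : ∀ {x y} (c : ℝ≥0), s(x, y) ∈ H ∪ F → dist (p₁ x) (p₁ y) = c →
      dist (p₂ x) (p₂ y) = c → dist (p x) (p y) = c := fun c hxy h₁ h₂ =>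
    hedge c c.2 hxy (by rw [h₁, h₂]; linear_combination (c : ℝ) ^ 2 * hμν)
  refine ⟨ht, p, fun x y h => hfixed _ (Or.inl h) (h₁H x y h) (h₂H x y h),
    fun x y h => hfixed _ (Or.inr h.1) (h₁F x y h) (h₂F x y h), fun x y h => ?_⟩
  exact hedge t ht (h ▸ Or.inr hf₀) (by rw [h₁f x y h, h₂f x y h]; simpa using hμν_sq)

/-- One-parameter-at-a-time form of the convex chart theorem: fixing the
lengths of all edges of a complete 3-tree except one edge `f₀ ∈ F`, the set of
realizable lengths of `f₀` is an interval (a convex subset of `ℝ`). -/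
theorem cayley_single_parameter_interval
    {V : Type*} [Fintype V] (G : SimpleGraph V)
    (hcard : 3 ≤ Fintype.card V) (hG : IsComplete3Tree G)
    (H F : Set (Sym2 V)) (hunion : H ∪ F = G.edgeSet) (hdisj : Disjoint H F)
    (lH : H → ℝ≥0) (f₀ : Sym2 V) (hf₀ : f₀ ∈ F)
    (l : (F \ {f₀} : Set (Sym2 V)) → ℝ≥0) :
    Convex ℝ {t : ℝ |
      0 ≤ t ∧
      ∃ p : V → EuclideanSpace ℝ (Fin 3),
        (∀ (x y : V) (h : s(x, y) ∈ H),
          dist (p x) (p y) = (lH ⟨s(x, y), h⟩ : ℝ)) ∧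
        (∀ (x y : V) (h : s(x, y) ∈ (F \ {f₀} : Set (Sym2 V))),
          dist (p x) (p y) = (l ⟨s(x, y), h⟩ : ℝ)) ∧
        (∀ x y : V, s(x, y) = f₀ → dist (p x) (p y) = t)} :=
  cayley_single_parameter_interval_general G hG H F hunion lH f₀ hf₀ l
end

section
/- Let G = (V, E) be a complete 2-tree on a finite vertex set V with |V| ≥ 2, and let the edge set be partitioned as E = H ∪ F with H ∩ F = ∅. Fix lengths l_H : H → ℝ≥0. Then the set of all l_F : F → ℝ≥0 for which there exists a map p : V → EuclideanSpace ℝ (Fin 2) satisfying dist (p u) (p v) = l_H e for every edge e = {u,v} ∈ H and dist (p u) (p v) = l_F f for every edge f = {u,v} ∈ F, viewed as a subset of ℝ^F, is convex. -/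
/-!
A convex combination of the edge lengths of two planar realizations of a 2-tree still satisfies
the triangle inequality on every triangle of the graph, because each realization does. A 2-tree is
built by attaching each new vertex to an earlier edge, and a triangle with prescribed sides
obeying the triangle inequality exists in the plane over any given base segment; so such lengths
can be realized vertex by vertex, and the convex combination lies in the configuration space.
-/

open scoped NNReal

def IsComplete2Tree {V : Type*} [Fintype V] (G : SimpleGraph V) : Prop :=
  ∃ (n : ℕ) (_ : 2 ≤ n) (v : Fin n ≃ V),
    (∀ i j : Fin n, i.val < 2 → j.val < 2 → i ≠ j → G.Adj (v i) (v j)) ∧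
    ∀ i : Fin n, 2 ≤ i.val →
      ∃ N : Finset (Fin n), N.card = 2 ∧ (∀ j ∈ N, j < i) ∧
        (∀ j : Fin n, j < i → (G.Adj (v i) (v j) ↔ j ∈ N)) ∧
        (∀ j ∈ N, ∀ k ∈ N, j ≠ k → G.Adj (v j) (v k))

open Complex in
theorem Complex.exists_dist_eq_dist_eq {P Q : ℂ} {a b : ℝ} (ha : 0 ≤ a) (hb : 0 ≤ b)
    (hPQ : dist P Q ≤ a + b) (haPQ : a ≤ dist P Q + b) (hbPQ : b ≤ dist P Q + a) :
    ∃ R : ℂ, dist R P = a ∧ dist R Q = b := by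
  set u : ℂ := exp (arg (Q - P) * I)
  have hu : ‖u‖ = 1 := norm_exp_ofReal_mul_I _
  have hQ : Q - P = dist P Q * u := by
    rw [dist_comm, dist_eq]
    exact (norm_mul_exp_arg_mul_I _).symm
  have hc₀ : 0 ≤ dist P Q := dist_nonneg
  generalize dist P Q = c at hPQ haPQ hbPQ hQ hc₀
  -- `R = P + (x + y i) u`: by the law of cosines `x` is the projection of `R - P` on the
  -- direction `u` of `Q - P`, and `y` the height of the triangle.
  obtain ⟨x, hcx, hxa⟩ : ∃ x : ℝ, 2 * c * x = a ^ 2 + c ^ 2 - b ^ 2 ∧ x ^ 2 ≤ a ^ 2 := by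
    rcases hc₀.eq_or_lt with rfl | hc
    · exact ⟨0, by nlinarith, by simpa using sq_nonneg a⟩
    · have hx : 2 * c * ((a ^ 2 + c ^ 2 - b ^ 2) / (2 * c)) = a ^ 2 + c ^ 2 - b ^ 2 := by
        field_simp
      refine ⟨_, hx, ?_⟩
      have : (2 * c * ((a ^ 2 + c ^ 2 - b ^ 2) / (2 * c))) ^ 2 ≤ (2 * c * a) ^ 2 := by
        rw [hx]; apply sq_le_sq' <;> nlinarith
      nlinarith [mul_pos hc hc]
  obtain ⟨y, hy⟩ : ∃ y : ℝ, y ^ 2 = a ^ 2 - x ^ 2 := ⟨_, Real.sq_sqrt (by linarith)⟩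
  have hnorm (r : ℝ) : ‖((r : ℂ) + y * I) * u‖ = √(r ^ 2 + y ^ 2) := by
    rw [norm_mul, hu, mul_one, norm_add_mul_I]
  refine ⟨P + (x + y * I) * u, ?_, ?_⟩
  · rw [dist_eq, add_sub_cancel_left, hnorm, show x ^ 2 + y ^ 2 = a ^ 2 by linarith,
      Real.sqrt_sq ha]
  · have : P + (x + y * I) * u - Q = ((x - c : ℝ) + y * I) * u := by
      push_cast; linear_combination -hQ
    rw [dist_eq, this, hnorm, show (x - c) ^ 2 + y ^ 2 = b ^ 2 by linear_combination hy - hcx,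
      Real.sqrt_sq hb]

section Realization

variable {V E : Type*} [PseudoMetricSpace E] {G : SimpleGraph V} {L : Sym2 V → ℝ}

def RealizesOn (G : SimpleGraph V) (L : Sym2 V → ℝ) (p : V → E) (S : Set V) :
    Prop :=
  ∀ x ∈ S, ∀ y ∈ S, G.Adj x y → dist (p x) (p y) = L s(x, y)

theorem RealizesOn.update [DecidableEq V] {p : V → E} {S : Set V} {z : V} {R : E}
    (hp : RealizesOn G L p S) (hR : ∀ y ∈ S, G.Adj z y → dist R (p y) = L s(z, y)) :
    RealizesOn G L (Function.update p z R) (insert z S) := by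
  intro x hx y hy hxy
  rcases eq_or_ne x z with rfl | hxz
  · simpa [hxy.ne'] using hR y (hy.resolve_left hxy.ne') hxy
  rcases eq_or_ne y z with rfl | hyz
  · simpa [hxz, dist_comm, Sym2.eq_swap] using hR x (hx.resolve_left hxz) hxy.symm
  · simpa [hxz, hyz] using hp x (hx.resolve_left hxz) y (hy.resolve_left hyz) hxy

theorem RealizesOn.exists_insert {p : V → ℂ} {S : Set V} {z a b : V}
    (hp : RealizesOn G L p S) (hL : ∀ x y z, G.Adj x y → G.Adj y z → G.Adj x z →
      L s(x, z) ≤ L s(x, y) + L s(y, z))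
    (hza₀ : 0 ≤ L s(z, a)) (hzb₀ : 0 ≤ L s(z, b))
    (ha : a ∈ S) (hb : b ∈ S) (hza : G.Adj z a) (hzb : G.Adj z b) (hab : a = b ∨ G.Adj a b)
    (hN : ∀ y ∈ S, G.Adj z y → y = a ∨ y = b) :
    ∃ q : V → ℂ, RealizesOn G L q (insert z S) := by
  classical
  have htri : dist (p a) (p b) ≤ L s(z, a) + L s(z, b) ∧
      L s(z, a) ≤ dist (p a) (p b) + L s(z, b) ∧ L s(z, b) ≤ dist (p a) (p b) + L s(z, a) := by
    rcases hab with rfl | hab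
    · simp only [dist_self]; refine ⟨?_, ?_, ?_⟩ <;> linarith
    · rw [hp a ha b hb hab]
      have h₁ := hL a z b hza.symm hzb hab
      have h₂ := hL z b a hzb hab.symm hza
      have h₃ := hL z a b hza hab hzb
      rw [Sym2.eq_swap (a := a) (b := z)] at h₁
      rw [Sym2.eq_swap (a := b) (b := a)] at h₂
      exact ⟨h₁, by linarith, by linarith⟩
  obtain ⟨R, hRa, hRb⟩ := Complex.exists_dist_eq_dist_eq hza₀ hzb₀ htri.1 htri.2.1 htri.2.2
  refine ⟨_, hp.update (R := R) fun y hy hzy => ?_⟩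
  rcases hN y hy hzy with rfl | rfl
  exacts [hRa, hRb]

end Realization

theorem IsComplete2Tree.exists_attachment_order {V : Type*} [Fintype V] {G : SimpleGraph V}
    (hG : IsComplete2Tree G) :
    ∃ (n : ℕ) (v : Fin n ≃ V), ∀ i : Fin n, 0 < (i : ℕ) → ∃ a b : V,
      v.symm a < i ∧ v.symm b < i ∧ G.Adj (v i) a ∧ G.Adj (v i) b ∧ (a = b ∨ G.Adj a b) ∧
      ∀ y, v.symm y < i → G.Adj (v i) y → y = a ∨ y = b := by
  obtain ⟨n, -, v, hbase, hstep⟩ := hG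
  refine ⟨n, v, fun i hi => ?_⟩
  rcases lt_or_ge (i : ℕ) 2 with hi2 | hi2
  · have h₀ : (v.symm (v ⟨0, i.pos⟩) : ℕ) < i := by simpa using hi
    have hadj := hbase i ⟨0, i.pos⟩ hi2 (by simp) (Fin.ne_of_val_ne hi.ne')
    refine ⟨_, _, h₀, h₀, hadj, hadj, Or.inl rfl, fun y hy _ => Or.inl ?_⟩
    rw [← v.symm_apply_eq]
    exact Fin.ext (show (v.symm y : ℕ) = 0 by rw [Fin.lt_def] at hy; omega)
  · obtain ⟨N, hcard, hlt, hiff, hN⟩ := hstep i hi2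
    obtain ⟨j, k, hjk, rfl⟩ := Finset.card_eq_two.mp hcard
    refine ⟨v j, v k, by simpa using hlt j (by simp), by simpa using hlt k (by simp),
      (hiff j (hlt j (by simp))).mpr (by simp), (hiff k (hlt k (by simp))).mpr (by simp),
      Or.inr (hN j (by simp) k (by simp) hjk), fun y hy hzy => ?_⟩
    have := (hiff (v.symm y) hy).mp (by simpa using hzy)
    simp only [Finset.mem_insert, Finset.mem_singleton] at this
    exact this.imp v.symm_apply_eq.mp v.symm_apply_eq.mp

theorem IsComplete2Tree.exists_realization {V : Type*} [Fintype V] {G : SimpleGraph V}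
    (hG : IsComplete2Tree G) (L : Sym2 V → ℝ) (hL₀ : ∀ x y, G.Adj x y → 0 ≤ L s(x, y))
    (hL : ∀ x y z, G.Adj x y → G.Adj y z → G.Adj x z → L s(x, z) ≤ L s(x, y) + L s(y, z)) :
    ∃ p : V → ℂ, ∀ x y, G.Adj x y → dist (p x) (p y) = L s(x, y) := by
  classical
  obtain ⟨n, v, hattach⟩ := hG.exists_attachment_order
  suffices ∀ m ≤ n, ∃ p : V → ℂ, RealizesOn G L p {x | (v.symm x : ℕ) < m} by
    obtain ⟨p, hp⟩ := this n le_rfl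
    exact ⟨p, fun x y => hp x (v.symm x).isLt y (v.symm y).isLt⟩
  intro m hm
  induction m with
  | zero => exact ⟨0, fun x hx => absurd hx (Nat.not_lt_zero _)⟩
  | succ m ih =>
    obtain ⟨p, hp⟩ := ih (by omega)
    have hS : {x | (v.symm x : ℕ) < m + 1} = insert (v ⟨m, hm⟩) {x | (v.symm x : ℕ) < m} := by
      ext x
      simp only [Set.mem_ofPred_eq, Set.mem_insert_iff, ← v.symm_apply_eq, Fin.ext_iff]
      omega
    rw [hS]
    rcases Nat.eq_zero_or_pos m with rfl | hm₀
    · exact ⟨_, hp.update (R := 0) fun y hy => absurd hy (Nat.not_lt_zero _)⟩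
    · obtain ⟨a, b, ha, hb, hza, hzb, hab, hN⟩ := hattach ⟨m, hm⟩ hm₀
      exact hp.exists_insert hL (hL₀ _ _ hza) (hL₀ _ _ hzb) ha hb hza hzb hab hN

def edgeLength {V E : Type*} [PseudoMetricSpace E] (p : V → E) : Sym2 V → ℝ :=
  Sym2.lift ⟨fun x y => dist (p x) (p y), fun _ _ => dist_comm _ _⟩

theorem edgeLength_nonneg {V E : Type*} [PseudoMetricSpace E] (p : V → E) (e : Sym2 V) :
    0 ≤ edgeLength p e :=
  e.ind fun _ _ => dist_nonneg

theorem cayley_configuration_space_convex_two_tree_general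
    {V : Type*} [Fintype V] (G : SimpleGraph V)
    (hG : IsComplete2Tree G)
    (H F : Set (Sym2 V)) (hunion : H ∪ F = G.edgeSet)
    (lH : H → ℝ≥0) :
    Convex ℝ {lF : F → ℝ |
      (∀ f, 0 ≤ lF f) ∧
      ∃ p : V → EuclideanSpace ℝ (Fin 2),
        (∀ (x y : V) (h : s(x, y) ∈ H),
          dist (p x) (p y) = (lH ⟨s(x, y), h⟩ : ℝ)) ∧
        (∀ (x y : V) (h : s(x, y) ∈ F),
          dist (p x) (p y) = lF ⟨s(x, y), h⟩)} := by
  rintro lF₁ ⟨hlF₁, p₁, hH₁, hF₁⟩ lF₂ ⟨hlF₂, p₂, hH₂, hF₂⟩ t s ht hs hts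
  have htri (x y z : V) : t * dist (p₁ x) (p₁ z) + s * dist (p₂ x) (p₂ z) ≤
      t * dist (p₁ x) (p₁ y) + s * dist (p₂ x) (p₂ y) +
        (t * dist (p₁ y) (p₁ z) + s * dist (p₂ y) (p₂ z)) := by
    linarith [mul_le_mul_of_nonneg_left (dist_triangle (p₁ x) (p₁ y) (p₁ z)) ht,
      mul_le_mul_of_nonneg_left (dist_triangle (p₂ x) (p₂ y) (p₂ z)) hs]
  obtain ⟨q, hq⟩ := hG.exists_realization (t • edgeLength p₁ + s • edgeLength p₂)
    (fun _ _ _ => add_nonneg (mul_nonneg ht (edgeLength_nonneg _ _))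
      (mul_nonneg hs (edgeLength_nonneg _ _)))
    (fun x y z _ _ _ => htri x y z)
  have hadj {x y : V} (h : s(x, y) ∈ H ∪ F) : G.Adj x y := by rwa [hunion] at h
  refine ⟨fun f => add_nonneg (mul_nonneg ht (hlF₁ f)) (mul_nonneg hs (hlF₂ f)),
    fun x => Complex.orthonormalBasisOneI.repr (q x), fun x y h => ?_, fun x y h => ?_⟩
  · rw [LinearIsometryEquiv.dist_map, hq x y (hadj (Or.inl h))]
    simp [edgeLength, hH₁ x y h, hH₂ x y h, ← add_mul, hts]
  · rw [LinearIsometryEquiv.dist_map, hq x y (hadj (Or.inr h))]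
    simp [edgeLength, hF₁ x y h, hF₂ x y h]

/-- The 2-dimensional analog of the convex Cayley chart theorem: the Cayley
configuration space of a complete 2-tree, with realizations in the Euclidean
plane, viewed as a subset of `ℝ^F`, is convex. -/
theorem cayley_configuration_space_convex_two_tree
    {V : Type*} [Fintype V] (G : SimpleGraph V)
    (hcard : 2 ≤ Fintype.card V) (hG : IsComplete2Tree G)
    (H F : Set (Sym2 V)) (hunion : H ∪ F = G.edgeSet) (hdisj : Disjoint H F)
    (lH : H → ℝ≥0) :
    Convex ℝ {lF : F → ℝ |
      (∀ f, 0 ≤ lF f) ∧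
      ∃ p : V → EuclideanSpace ℝ (Fin 2),
        (∀ (x y : V) (h : s(x, y) ∈ H),
          dist (p x) (p y) = (lH ⟨s(x, y), h⟩ : ℝ)) ∧
        (∀ (x y : V) (h : s(x, y) ∈ F),
          dist (p x) (p y) = lF ⟨s(x, y), h⟩)} :=
  cayley_configuration_space_convex_two_tree_general G hG H F hunion lH
end

section
/- Let c₁, c₂, c₃ be three affinely independent points in EuclideanSpace ℝ (Fin 3) and let r₁, r₂, r₃ ≥ 0. Then the set of points x ∈ EuclideanSpace ℝ (Fin 3) with dist x cᵢ = rᵢ for i = 1, 2, 3 has at most two elements. -/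
/-!
All points of the intersection are equidistant from each center, so the vector between any two
of them is orthogonal to the plane through `c₁, c₂, c₃`; in `ℝ³` that orthogonal complement is a
line, hence the intersection is collinear. Three distinct points of a sphere are never collinear.
-/

open Module Submodule EuclideanGeometry

namespace EuclideanGeometry

variable {V P : Type*} [NormedAddCommGroup V] [InnerProductSpace ℝ V] [MetricSpace P]
  [NormedAddTorsor V P]

theorem Cospherical.encard_le_two_of_collinear {s : Set P} (hs : Cospherical s)
    (hc : Collinear ℝ s) : s.encard ≤ 2 := by
  by_contra! h
  obtain ⟨t, hts, ht⟩ := Set.exists_subset_encard_eq (Order.add_one_le_of_lt h)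
  obtain ⟨x, y, z, hxy, hxz, hyz, rfl⟩ := Set.encard_eq_three.mp ht
  exact affineIndependent_iff_not_collinear_set.mp
    ((hs.subset hts).affineIndependent_of_ne hxy hxz hyz) (hc.subset hts)

theorem isOrtho_vectorSpan_of_forall_dist_eq {s t : Set P}
    (h : ∀ c ∈ s, ∀ p ∈ t, ∀ q ∈ t, dist p c = dist q c) :
    vectorSpan ℝ s ⟂ vectorSpan ℝ t := by
  rw [vectorSpan_def, vectorSpan_def, isOrtho_span]
  rintro _ ⟨c₁, hc₁, c₂, hc₂, rfl⟩ _ ⟨p₁, hp₁, p₂, hp₂, rfl⟩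
  exact inner_vsub_vsub_of_dist_eq_of_dist_eq (h c₂ hc₂ p₂ hp₂ p₁ hp₁) (h c₁ hc₁ p₂ hp₂ p₁ hp₁)

theorem collinear_of_forall_dist_eq [FiniteDimensional ℝ V] {s t : Set P}
    (hs : finrank ℝ V ≤ finrank ℝ (vectorSpan ℝ s) + 1)
    (h : ∀ c ∈ s, ∀ p ∈ t, ∀ q ∈ t, dist p c = dist q c) : Collinear ℝ t := by
  rw [collinear_iff_finrank_le_one]
  calc finrank ℝ (vectorSpan ℝ t) ≤ finrank ℝ (vectorSpan ℝ s)ᗮ :=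
        finrank_mono (isOrtho_vectorSpan_of_forall_dist_eq h).ge
    _ ≤ 1 := by have := (vectorSpan ℝ s).finrank_add_finrank_orthogonal; omega

end EuclideanGeometry

theorem three_sphere_intersection_at_most_two_general
    (c₁ c₂ c₃ : EuclideanSpace ℝ (Fin 3))
    (hindep : AffineIndependent ℝ ![c₁, c₂, c₃])
    (r₁ r₂ r₃ : ℝ) :
    {x : EuclideanSpace ℝ (Fin 3) |
      dist x c₁ = r₁ ∧ dist x c₂ = r₂ ∧ dist x c₃ = r₃}.encard ≤ 2 := by
  have hplane : finrank ℝ (vectorSpan ℝ (Set.range ![c₁, c₂, c₃])) = 2 :=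
    hindep.finrank_vectorSpan (Fintype.card_fin 3)
  refine Cospherical.encard_le_two_of_collinear ⟨c₁, r₁, fun x hx ↦ hx.1⟩
    (collinear_of_forall_dist_eq (s := Set.range ![c₁, c₂, c₃]) (by simp [hplane]) ?_)
  rintro _ ⟨i, rfl⟩ p hp q hq
  fin_cases i
  exacts [hp.1.trans hq.1.symm, hp.2.1.trans hq.2.1.symm, hp.2.2.trans hq.2.2.symm]

/-- Three spheres in `ℝ³` with affinely independent (non-collinear) centers
intersect in at most two points. -/
theorem three_sphere_intersection_at_most_two
    (c₁ c₂ c₃ : EuclideanSpace ℝ (Fin 3))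
    (hindep : AffineIndependent ℝ ![c₁, c₂, c₃])
    (r₁ r₂ r₃ : ℝ) (hr₁ : 0 ≤ r₁) (hr₂ : 0 ≤ r₂) (hr₃ : 0 ≤ r₃) :
    {x : EuclideanSpace ℝ (Fin 3) |
      dist x c₁ = r₁ ∧ dist x c₂ = r₂ ∧ dist x c₃ = r₃}.encard ≤ 2 :=
  three_sphere_intersection_at_most_two_general c₁ c₂ c₃ hindep r₁ r₂ r₃
end

section
/- Let G = (V, E) be a complete 3-tree on n ≥ 3 vertices with ordering v₁,…,vₙ as in the definition, let l : E → ℝ≥0 be edge lengths, and fix three points q₁, q₂, q₃ ∈ EuclideanSpace ℝ (Fin 3). Then the set of realizations p : V → EuclideanSpace ℝ (Fin 3) of the linkage (G, l) such that p vⱼ = qⱼ for j = 1, 2, 3 and such that, for every i ≥ 4, the images under p of the three earlier neighbors of vᵢ are affinely independent, is a finite set with at most 2^(n−3) elements. -/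
/-!
Once the earlier vertices are placed, the `i`-th vertex lies at prescribed distances from the
three affinely independent images of its earlier neighbours. Any two such points differ by a
vector orthogonal to the plane of those neighbours, so all of them lie on one line; they also lie
on a sphere, hence there are at most two of them. Recording for each `i ≥ 3` which of the (at most)
two admissible positions was taken is then an injective code of the realizations into
`2 ^ (n - 3)` bit strings.
-/

open scoped NNReal
open Module EuclideanGeometry

section BranchCounting

variable {ι α : Type*} [Preorder ι]

def branchValues (S : Set (ι → α)) (f : ι → α) (i : ι) : Set α :=
  (fun g => g i) '' {g ∈ S | ∀ j < i, g j = f j}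

theorem branchValues_congr {S : Set (ι → α)} {f g : ι → α} {i : ι} (h : ∀ j < i, f j = g j) :
    branchValues S f i = branchValues S g i := by
  have hprefix : ∀ g' : ι → α, (∀ j < i, g' j = f j) ↔ ∀ j < i, g' j = g j :=
    fun g' => forall₂_congr fun j hj => by rw [h j hj]
  simp only [branchValues, hprefix]

theorem apply_mem_branchValues {S : Set (ι → α)} {f : ι → α} (hf : f ∈ S) (i : ι) :
    f i ∈ branchValues S f i :=
  ⟨f, ⟨hf, fun _ _ => rfl⟩, rfl⟩

theorem Set.eq_of_mem_of_encard_le_two {X : Set α} (hX : X.encard ≤ 2) {c x y : α}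
    (hc : c ∈ X) (hx : x ∈ X) (hy : y ∈ X) (h : x = c ↔ y = c) : x = y := by
  by_contra hxy
  have hxc : x ≠ c := fun hxc => hxy (hxc.trans (h.1 hxc).symm)
  have hyc : y ≠ c := fun hyc => hxc (h.2 hyc)
  have h3 : ({x, y, c} : Set α).encard = 3 := Set.encard_eq_three.2 ⟨x, y, c, hxy, hxc, hyc, rfl⟩
  have := h3 ▸ Set.encard_le_encard (Set.insert_subset hx (Set.insert_subset hy
    (Set.singleton_subset_iff.2 hc)))
  exact absurd (this.trans hX) (by decide)

theorem encard_le_two_pow_of_branchValues [Nonempty α] [WellFoundedLT ι] {S : Set (ι → α)}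
    (T : Finset ι) (h₁ : ∀ f ∈ S, ∀ i ∉ T, (branchValues S f i).Subsingleton)
    (h₂ : ∀ f ∈ S, ∀ i ∈ T, (branchValues S f i).encard ≤ 2) :
    S.encard ≤ 2 ^ T.card := by
  classical
  let code (f : ι → α) (i : T) : Bool :=
    decide (f i = Classical.epsilon (· ∈ branchValues S f i))
  have hinj : Set.InjOn code S := by
    intro f hf g hg hfg
    funext i
    induction i using WellFoundedLT.induction with
    | _ i ih =>
    have hfg_i := branchValues_congr (S := S) ih
    have hfi := apply_mem_branchValues hf i
    have hgi : g i ∈ branchValues S f i := hfg_i ▸ apply_mem_branchValues hg i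
    by_cases hi : i ∈ T
    · have hbit := congrFun hfg ⟨i, hi⟩
      simp only [code, ← hfg_i, decide_eq_decide] at hbit
      exact Set.eq_of_mem_of_encard_le_two (h₂ f hf i hi) (Classical.epsilon_spec ⟨_, hfi⟩)
        hfi hgi hbit
    · exact h₁ f hf i hi hfi hgi
  calc S.encard = (code '' S).encard := hinj.encard_image.symm
    _ ≤ ENat.card (T → Bool) := Set.encard_le_card
    _ = 2 ^ T.card := by simp

end BranchCounting

section Trilateration

variable {V P : Type*} [NormedAddCommGroup V] [InnerProductSpace ℝ V] [MetricSpace P]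
  [NormedAddTorsor V P]

theorem Collinear.encard_le_two_of_cospherical {s : Set P} (hc : Collinear ℝ s)
    (hs : Cospherical s) : s.encard ≤ 2 := by
  by_contra! h
  obtain ⟨t, hts, ht⟩ := Set.exists_subset_encard_eq (Order.add_one_le_of_lt h)
  obtain ⟨x, y, z, hxy, hxz, hyz, rfl⟩ := Set.encard_eq_three.1 ht
  have hind := (hs.subset hts).affineIndependent_of_ne hxy hxz hyz
  exact affineIndependent_iff_not_collinear_set.1 hind (hc.subset hts)

theorem EuclideanGeometry.vsub_mem_orthogonal_vectorSpan_of_dist_eq {s : Set P} {x y : P}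
    (h : ∀ a ∈ s, dist x a = dist y a) : y -ᵥ x ∈ (vectorSpan ℝ s)ᗮ := by
  have hs : affineSpan ℝ s ≤ AffineSubspace.perpBisector x y :=
    affineSpan_le.2 fun a ha => AffineSubspace.mem_perpBisector_iff_dist_eq'.2 (h a ha)
  have hdir := AffineSubspace.direction_le hs
  rw [direction_affineSpan, AffineSubspace.direction_perpBisector] at hdir
  exact Submodule.le_orthogonal_orthogonal _ |>.trans (Submodule.orthogonal_le hdir)
    (Submodule.mem_span_singleton_self _)

variable [FiniteDimensional ℝ V] {ι : Type*} [Fintype ι] {a : ι → P} {n : ℕ}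

theorem EuclideanGeometry.collinear_setOf_dist_eq (ha : AffineIndependent ℝ a)
    (hι : Fintype.card ι = n + 1) (hV : finrank ℝ V = n + 1) (r : ι → ℝ) :
    Collinear ℝ {x | ∀ k, dist x (a k) = r k} := by
  have hW : finrank ℝ (vectorSpan ℝ (Set.range a))ᗮ = 1 := by
    have := (vectorSpan ℝ (Set.range a)).finrank_add_finrank_orthogonal
    rw [ha.finrank_vectorSpan hι, hV] at this
    omega
  have hle : vectorSpan ℝ {x | ∀ k, dist x (a k) = r k} ≤ (vectorSpan ℝ (Set.range a))ᗮ := by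
    refine Submodule.span_le.2 ?_
    rintro _ ⟨y, hy, x, hx, rfl⟩
    refine vsub_mem_orthogonal_vectorSpan_of_dist_eq ?_
    rintro _ ⟨k, rfl⟩
    rw [hx k, hy k]
  rw [collinear_iff_finrank_le_one, ← hW]
  exact Submodule.finrank_mono hle

theorem EuclideanGeometry.encard_setOf_dist_eq_le_two (ha : AffineIndependent ℝ a)
    (hι : Fintype.card ι = n + 1) (hV : finrank ℝ V = n + 1) (r : ι → ℝ) :
    {x | ∀ k, dist x (a k) = r k}.encard ≤ 2 := by
  have : Nonempty ι := Fintype.card_pos_iff.1 (hι ▸ n.succ_pos)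
  let k₀ := Classical.arbitrary ι
  exact (collinear_setOf_dist_eq ha hι hV r).encard_le_two_of_cospherical
    ⟨a k₀, r k₀, fun x hx => hx k₀⟩

end Trilateration

/-- A complete 3-tree linkage, with the base triangle pinned down and all
sequentially placed tetrahedra nondegenerate, has at most `2 ^ (n - 3)`
realizations in `ℝ³`. Here `v : Fin n ≃ V` is the 3-tree ordering of the
vertices and `N i` is the set of earlier neighbors of the `i`-th vertex. -/
theorem complete3Tree_realizations_finite
    {V : Type*} {n : ℕ} (hn : 3 ≤ n)
    (G : SimpleGraph V) (v : Fin n ≃ V) (N : Fin n → Finset (Fin n))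
    (hN : ∀ i : Fin n, 3 ≤ i.val →
      (N i).card = 3 ∧ (∀ j ∈ N i, j < i) ∧
      (∀ j : Fin n, j < i → (G.Adj (v i) (v j) ↔ j ∈ N i)) ∧
      (∀ j ∈ N i, ∀ k ∈ N i, j ≠ k → G.Adj (v j) (v k)))
    (l : G.edgeSet → ℝ≥0)
    (q₁ q₂ q₃ : EuclideanSpace ℝ (Fin 3)) :
    {p : V → EuclideanSpace ℝ (Fin 3) |
      (∀ (x y : V) (h : G.Adj x y),
        dist (p x) (p y) = (l ⟨s(x, y), G.mem_edgeSet.mpr h⟩ : ℝ)) ∧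
      p (v ⟨0, by omega⟩) = q₁ ∧ p (v ⟨1, by omega⟩) = q₂ ∧
      p (v ⟨2, by omega⟩) = q₃ ∧
      (∀ i : Fin n, 3 ≤ i.val →
        AffineIndependent ℝ (fun j : {x // x ∈ N i} => p (v j.1)))}.encard
      ≤ 2 ^ (n - 3) := by
  rw [← v.surjective.injective_comp_right.injOn.encard_image, ← Nat.card_Ico 3 n,
    ← Finset.card_attachFin _ fun m hm => (Finset.mem_Ico.1 hm).2]
  refine encard_le_two_pow_of_branchValues _ ?_ ?_
  · rintro _ ⟨p, hp, rfl⟩ i hi _ ⟨_, ⟨⟨p₁, hp₁, rfl⟩, -⟩, rfl⟩ _ ⟨_, ⟨⟨p₂, hp₂, rfl⟩, -⟩, rfl⟩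
    have hi : i = ⟨0, by omega⟩ ∨ i = ⟨1, by omega⟩ ∨ i = ⟨2, by omega⟩ := by
      simp only [Finset.mem_attachFin, Finset.mem_Ico, i.isLt, and_true, not_le] at hi
      simp only [Fin.ext_iff]
      omega
    rcases hi with rfl | rfl | rfl
    exacts [hp₁.2.1.trans hp₂.2.1.symm, hp₁.2.2.1.trans hp₂.2.2.1.symm,
      hp₁.2.2.2.1.trans hp₂.2.2.2.1.symm]
  · rintro _ ⟨p, hp, rfl⟩ i hi
    have hi : 3 ≤ i.val := (Finset.mem_Ico.1 (Finset.mem_attachFin _ |>.1 hi)).1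
    obtain ⟨hcard, hlt, hnbr, -⟩ := hN i hi
    have hadj (k : N i) : G.Adj (v i) (v k) := (hnbr k (hlt k k.2)).2 k.2
    refine (Set.encard_le_encard ?_).trans (encard_setOf_dist_eq_le_two (hp.2.2.2.2 i hi)
      (by simp [hcard]) finrank_euclideanSpace_fin fun k => l ⟨s(v i, v k), hadj k⟩)
    rintro _ ⟨_, ⟨⟨p', hp', rfl⟩, hagree⟩, rfl⟩ k
    rw [← hp'.1 _ _ (hadj k)]
    exact congrArg _ (hagree k (hlt k k.2)).symm
end

section
/- Fix nonnegative reals d₁₂, d₁₃, d₂₃, d₁₄, d₂₄. Then the set of values t ∈ ℝ≥0 for which there exist points p₁, p₂, p₃, p₄ ∈ EuclideanSpace ℝ (Fin 3) with dist p₁ p₂ = d₁₂, dist p₁ p₃ = d₁₃, dist p₂ p₃ = d₂₃, dist p₁ p₄ = d₁₄, dist p₂ p₄ = d₂₄, and dist p₃ p₄ = t, is an interval (a convex subset of ℝ). -/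
/-!
Polarization turns the squared distances of points `p₀, …, pₙ` into the Gram matrix of
`p₁ - p₀, …, pₙ - p₀`, an expression linear in the squared distances, and every positive
semidefinite `n × n` matrix is such a Gram matrix in `ℝⁿ`. So the squared-distance matrices of
`n + 1` points in `ℝⁿ` form a convex set. For a tetrahedron with five edges fixed, the realizable
values of the sixth squared length are therefore an interval, and so are their square roots.
-/

open scoped RealInnerProductSpace MatrixOrder ComplexOrder

namespace Matrix

theorem PosSemidef.exists_gram_eq {𝕜 ι : Type*} [RCLike 𝕜] [Fintype ι] {A : Matrix ι ι 𝕜}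
    (hA : A.PosSemidef) : ∃ v : ι → EuclideanSpace 𝕜 ι, gram 𝕜 v = A := by
  classical
  obtain ⟨B, rfl⟩ := CStarAlgebra.nonneg_iff_eq_star_mul_self.mp hA.nonneg
  refine ⟨fun i ↦ WithLp.toLp 2 fun k ↦ B k i, ?_⟩
  ext i j
  simp [mul_apply, PiLp.inner_apply, mul_comm]

theorem convex_setOf_posSemidef {𝕜 ι : Type*} [RCLike 𝕜] :
    Convex ℝ {A : Matrix ι ι 𝕜 | A.PosSemidef} :=
  fun _ hA _ hB _ _ ha hb _ ↦ (hA.smul ha).add (hB.smul hb)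

noncomputable def sqDistGram (n : ℕ) :
    Matrix (Fin (n + 1)) (Fin (n + 1)) ℝ →ₗ[ℝ] Matrix (Fin n) (Fin n) ℝ where
  toFun S := of fun i j ↦ (S 0 i.succ + S 0 j.succ - S i.succ j.succ) / 2
  map_add' S T := by ext; simp; ring
  map_smul' c S := by ext; simp; ring

@[simp]
theorem sqDistGram_apply {n : ℕ} (S : Matrix (Fin (n + 1)) (Fin (n + 1)) ℝ) (i j : Fin n) :
    sqDistGram n S i j = (S 0 i.succ + S 0 j.succ - S i.succ j.succ) / 2 :=
  rfl

theorem gram_sub_eq_sqDistGram {E : Type*} [NormedAddCommGroup E] [InnerProductSpace ℝ E]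
    {n : ℕ} (p : Fin (n + 1) → E) :
    gram ℝ (fun i ↦ p i.succ - p 0) = sqDistGram n (of fun i j ↦ dist (p i) (p j) ^ 2) := by
  ext i j
  have h := norm_sub_sq_real (p i.succ - p 0) (p j.succ - p 0)
  rw [sub_sub_sub_cancel_right] at h
  simp only [gram_apply, sqDistGram_apply, of_apply, dist_eq_norm]
  rw [norm_sub_rev (p 0) (p i.succ), norm_sub_rev (p 0) (p j.succ)]
  linarith

end Matrix

open Matrix

namespace EuclideanSpace

theorem exists_dist_sq_eq_iff {n : ℕ} {S : Matrix (Fin (n + 1)) (Fin (n + 1)) ℝ} :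
    (∃ p : Fin (n + 1) → EuclideanSpace ℝ (Fin n), ∀ i j, dist (p i) (p j) ^ 2 = S i j) ↔
      S.IsSymm ∧ (∀ i, S i i = 0) ∧ (sqDistGram n S).PosSemidef := by
  constructor
  · rintro ⟨p, hp⟩
    obtain rfl : S = of fun i j ↦ dist (p i) (p j) ^ 2 := by ext i j; simp [hp]
    refine ⟨IsSymm.ext fun i j ↦ by simp [dist_comm], fun i ↦ by simp, ?_⟩
    rw [← gram_sub_eq_sqDistGram]
    exact posSemidef_gram ℝ _
  · rintro ⟨hsymm, hdiag, hpsd⟩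
    obtain ⟨v, hv⟩ := hpsd.exists_gram_eq
    have hinner i j : ⟪v i, v j⟫ = (S 0 i.succ + S 0 j.succ - S i.succ j.succ) / 2 := by
      simpa using congrFun (congrFun hv i) j
    have hnorm i : ‖v i‖ ^ 2 = S 0 i.succ := by
      rw [← real_inner_self_eq_norm_sq, hinner, hdiag]; ring
    refine ⟨Fin.cons 0 v, Fin.cases (Fin.cases ?_ fun j ↦ ?_) fun i ↦ Fin.cases ?_ fun j ↦ ?_⟩
    · simp [hdiag]
    · simp [hnorm]
    · simp [dist_eq_norm, hnorm, ← hsymm.apply]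
    · simp only [Fin.cons_succ, dist_eq_norm, norm_sub_sq_real, hnorm, hinner]
      ring

theorem convex_setOf_exists_dist_sq_eq (n : ℕ) :
    Convex ℝ {S : Matrix (Fin (n + 1)) (Fin (n + 1)) ℝ |
      ∃ p : Fin (n + 1) → EuclideanSpace ℝ (Fin n), ∀ i j, dist (p i) (p j) ^ 2 = S i j} := by
  simp_rw [exists_dist_sq_eq_iff]
  rintro S ⟨hS, hS0, hSG⟩ T ⟨hT, hT0, hTG⟩ a b ha hb hab
  refine ⟨(hS.smul a).add (hT.smul b), fun i ↦ by simp [hS0, hT0], ?_⟩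
  rw [map_add, map_smul, map_smul]
  exact convex_setOf_posSemidef hSG hTG ha hb hab

end EuclideanSpace

theorem Convex.setOf_nonneg_sq_mem {U : Set ℝ} (hU : Convex ℝ U) :
    Convex ℝ {t : ℝ | 0 ≤ t ∧ t ^ 2 ∈ U} := by
  rw [convex_iff_ordConnected] at hU ⊢
  refine ⟨fun x hx y hy t ⟨hxt, hty⟩ ↦ ?_⟩
  have ht : 0 ≤ t := hx.1.trans hxt
  exact ⟨ht, hU.out hx.2 hy.2 ⟨pow_le_pow_left₀ hx.1 hxt 2, pow_le_pow_left₀ ht hty 2⟩⟩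

theorem exists_tetrahedron_iff {X : Type*} [PseudoMetricSpace X] {d₁₂ d₁₃ d₂₃ d₁₄ d₂₄ d₃₄ : ℝ}
    (h₁₂ : 0 ≤ d₁₂) (h₁₃ : 0 ≤ d₁₃) (h₂₃ : 0 ≤ d₂₃) (h₁₄ : 0 ≤ d₁₄) (h₂₄ : 0 ≤ d₂₄)
    (h₃₄ : 0 ≤ d₃₄) :
    (∃ p₁ p₂ p₃ p₄ : X, dist p₁ p₂ = d₁₂ ∧ dist p₁ p₃ = d₁₃ ∧ dist p₂ p₃ = d₂₃ ∧
      dist p₁ p₄ = d₁₄ ∧ dist p₂ p₄ = d₂₄ ∧ dist p₃ p₄ = d₃₄) ↔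
    ∃ p : Fin 4 → X, ∀ i j, dist (p i) (p j) ^ 2 =
      !![0, d₁₂ ^ 2, d₁₃ ^ 2, d₁₄ ^ 2; d₁₂ ^ 2, 0, d₂₃ ^ 2, d₂₄ ^ 2;
        d₁₃ ^ 2, d₂₃ ^ 2, 0, d₃₄ ^ 2; d₁₄ ^ 2, d₂₄ ^ 2, d₃₄ ^ 2, 0] i j := by
  constructor
  · rintro ⟨p₁, p₂, p₃, p₄, e₁₂, e₁₃, e₂₃, e₁₄, e₂₄, e₃₄⟩
    refine ⟨![p₁, p₂, p₃, p₄], ?_⟩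
    simp [Fin.forall_fin_succ, dist_comm, e₁₂, e₁₃, e₂₃, e₁₄, e₂₄, e₃₄]
  · rintro ⟨p, hp⟩
    have hdist {i j : Fin 4} {d : ℝ} (hd : 0 ≤ d) (h : dist (p i) (p j) ^ 2 = d ^ 2) :
        dist (p i) (p j) = d :=
      (sq_eq_sq₀ dist_nonneg hd).1 h
    exact ⟨p 0, p 1, p 2, p 3, hdist h₁₂ (hp 0 1), hdist h₁₃ (hp 0 2), hdist h₂₃ (hp 1 2),
      hdist h₁₄ (hp 0 3), hdist h₂₄ (hp 1 3), hdist h₃₄ (hp 2 3)⟩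

/-- The single-tetrahedron "tetrahedral inequality" lemma: with five of the six
pairwise distances among four points in `ℝ³` fixed, the realizable values of
the sixth distance form an interval (a convex subset of `ℝ`). -/
theorem tetrahedral_interval
    (d₁₂ d₁₃ d₂₃ d₁₄ d₂₄ : ℝ)
    (h₁₂ : 0 ≤ d₁₂) (h₁₃ : 0 ≤ d₁₃) (h₂₃ : 0 ≤ d₂₃)
    (h₁₄ : 0 ≤ d₁₄) (h₂₄ : 0 ≤ d₂₄) :
    Convex ℝ {t : ℝ |
      0 ≤ t ∧
      ∃ p₁ p₂ p₃ p₄ : EuclideanSpace ℝ (Fin 3),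
        dist p₁ p₂ = d₁₂ ∧ dist p₁ p₃ = d₁₃ ∧ dist p₂ p₃ = d₂₃ ∧
        dist p₁ p₄ = d₁₄ ∧ dist p₂ p₄ = d₂₄ ∧ dist p₃ p₄ = t} := by
  let S : ℝ → Matrix (Fin 4) (Fin 4) ℝ := fun u ↦
    !![0, d₁₂ ^ 2, d₁₃ ^ 2, d₁₄ ^ 2; d₁₂ ^ 2, 0, d₂₃ ^ 2, d₂₄ ^ 2;
      d₁₃ ^ 2, d₂₃ ^ 2, 0, u; d₁₄ ^ 2, d₂₄ ^ 2, u, 0]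
  have hS : ⇑(AffineMap.lineMap (S 0) (S 1) : ℝ →ᵃ[ℝ] _) = S := by
    ext u i j
    fin_cases i <;> fin_cases j <;> simp [S, AffineMap.lineMap_apply_module] <;> ring
  have hconvex := (Convex.affine_preimage (AffineMap.lineMap (S 0) (S 1) : ℝ →ᵃ[ℝ] _)
    (EuclideanSpace.convex_setOf_exists_dist_sq_eq 3)).setOf_nonneg_sq_mem
  rw [hS] at hconvex
  convert hconvex using 3 with t
  exact and_congr_right fun ht ↦ exists_tetrahedron_iff h₁₂ h₁₃ h₂₃ h₁₄ h₂₄ ht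
end

section
/- Let G = (V, E) be a complete 2-tree on n ≥ 2 vertices with ordering v₁,…,vₙ as in the definition, let l : E → ℝ≥0 be edge lengths, and fix two distinct points q₁, q₂ ∈ EuclideanSpace ℝ (Fin 2). Then the set of realizations p : V → EuclideanSpace ℝ (Fin 2) of the linkage (G, l) such that p vⱼ = qⱼ for j = 1, 2 and such that, for every i ≥ 3, the images under p of the two earlier neighbors of vᵢ are distinct, is a finite set with at most 2^(n−2) elements. -/
/-!
Place the vertices in the order of the 2-tree. Vertex `i ≥ 2` lies on the two circles centred at
the images of its earlier neighbours `j`, `k`, which are distinct points; these circles meet in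
at most two points, mirror images in the line through the centres, so `p (v i)` is determined by
`p (v j)`, `p (v k)` and the sign of the area form `ω (p (v k) - p (v j)) (p (v i) - p (v j))`.
By induction along the order, a realization is determined by its vector of `n - 2` signs.
-/

open Module
open scoped NNReal
open scoped RealInnerProductSpace

theorem eq_of_sq_eq_sq_of_nonneg_iff {R : Type*} [CommRing R] [LinearOrder R]
    [IsStrictOrderedRing R] {s t : R} (h : s ^ 2 = t ^ 2) (hst : 0 ≤ s ↔ 0 ≤ t) : s = t := by
  by_cases hs : 0 ≤ s
  · exact (pow_left_inj₀ hs (hst.mp hs) two_ne_zero).mp h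
  · have ht : t < 0 := not_le.mp (hst.not.mp hs)
    have hneg : -s = -t :=
      (pow_left_inj₀ (by linarith) (by linarith) two_ne_zero).mp (by simpa using h)
    exact neg_inj.mp hneg

theorem Fin.card_subtype_le_val (n k : ℕ) : Fintype.card {i : Fin n // k ≤ i.val} = n - k := by
  simp_rw [← not_lt]
  rw [Fintype.card_subtype_compl, Fintype.card_subtype, Fin.card_filter_val_lt, Fintype.card_fin]
  omega

instance : Fact (finrank ℝ (EuclideanSpace ℝ (Fin 2)) = 2) := ⟨finrank_euclideanSpace_fin⟩

namespace Orientation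

variable {E : Type*} [NormedAddCommGroup E] [InnerProductSpace ℝ E] [Fact (finrank ℝ E = 2)]
  (o : Orientation ℝ E (Fin 2))

local notation "ω" => o.areaForm

theorem eq_of_inner_eq_of_areaForm_eq {u x y : E} (hu : u ≠ 0) (hinner : ⟪u, x⟫ = ⟪u, y⟫)
    (harea : ω u x = ω u y) : x = y := by
  have h := o.inner_sq_add_areaForm_sq u (x - y)
  rw [inner_sub_right, hinner, map_sub, harea, sub_self, sub_self] at h
  have : ‖x - y‖ = 0 := by simpa [hu] using h
  exact sub_eq_zero.mp (norm_eq_zero.mp this)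

theorem eq_of_dist_eq_of_dist_eq_of_areaForm_nonneg_iff {a b x y : E} (hab : a ≠ b)
    (ha : dist x a = dist y a) (hb : dist x b = dist y b)
    (hside : 0 ≤ ω (b - a) (x - a) ↔ 0 ≤ ω (b - a) (y - a)) : x = y := by
  have hnorm : ‖x - a‖ = ‖y - a‖ := by simpa only [dist_eq_norm] using ha
  have hinner : ⟪b - a, x - a⟫ = ⟪b - a, y - a⟫ := by
    have h : ‖(x - a) - (b - a)‖ ^ 2 = ‖(y - a) - (b - a)‖ ^ 2 := by
      simpa only [sub_sub_sub_cancel_right, dist_eq_norm] using congrArg (· ^ 2) hb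
    rw [norm_sub_sq_real (x - a), norm_sub_sq_real (y - a), hnorm] at h
    linarith [real_inner_comm (b - a) (x - a), real_inner_comm (b - a) (y - a)]
  have harea : ω (b - a) (x - a) = ω (b - a) (y - a) := by
    refine eq_of_sq_eq_sq_of_nonneg_iff ?_ hside
    have hx := o.inner_sq_add_areaForm_sq (b - a) (x - a)
    rw [hinner, hnorm, ← o.inner_sq_add_areaForm_sq (b - a) (y - a)] at hx
    linarith
  exact sub_left_injective (o.eq_of_inner_eq_of_areaForm_eq (sub_ne_zero.mpr hab.symm) hinner harea)

theorem eq_of_eqOn_compl_of_dist_eq_of_areaForm_nonneg_iff {ι : Type*} [Preorder ι]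
    [WellFoundedLT ι] {S : Set ι} {j k : ι → ι} {p q : ι → E} (hfix : Set.EqOn p q Sᶜ)
    (hj : ∀ i ∈ S, j i < i) (hk : ∀ i ∈ S, k i < i) (hjk : ∀ i ∈ S, p (j i) ≠ p (k i))
    (hdj : ∀ i ∈ S, dist (p i) (p (j i)) = dist (q i) (q (j i)))
    (hdk : ∀ i ∈ S, dist (p i) (p (k i)) = dist (q i) (q (k i)))
    (hside : ∀ i ∈ S, 0 ≤ ω (p (k i) - p (j i)) (p i - p (j i)) ↔
      0 ≤ ω (q (k i) - q (j i)) (q i - q (j i))) :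
    p = q := by
  funext i
  induction i using WellFoundedLT.induction with
  | _ i ih =>
    by_cases hi : i ∈ S
    · have hpj := ih _ (hj i hi)
      have hpk := ih _ (hk i hi)
      refine o.eq_of_dist_eq_of_dist_eq_of_areaForm_nonneg_iff (hjk i hi) ?_ ?_ ?_
      · rw [hdj i hi, hpj]
      · rw [hdk i hi, hpk]
      · rw [hside i hi, hpj, hpk]
    · exact hfix hi

end Orientation

/-- A complete 2-tree linkage, with the base edge pinned down at two distinct
points and the two earlier neighbors of each sequentially placed vertex having
distinct images, has at most `2 ^ (n - 2)` realizations in the plane. Here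
`v : Fin n ≃ V` is the 2-tree ordering of the vertices and `N i` is the set of
earlier neighbors of the `i`-th vertex. -/
theorem complete2Tree_realizations_finite
    {V : Type*} {n : ℕ} (hn : 2 ≤ n)
    (G : SimpleGraph V) (v : Fin n ≃ V) (N : Fin n → Finset (Fin n))
    (hN : ∀ i : Fin n, 2 ≤ i.val →
      (N i).card = 2 ∧ (∀ j ∈ N i, j < i) ∧
      (∀ j : Fin n, j < i → (G.Adj (v i) (v j) ↔ j ∈ N i)) ∧
      (∀ j ∈ N i, ∀ k ∈ N i, j ≠ k → G.Adj (v j) (v k)))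
    (l : G.edgeSet → ℝ≥0)
    (q₁ q₂ : EuclideanSpace ℝ (Fin 2)) :
    {p : V → EuclideanSpace ℝ (Fin 2) |
      (∀ (x y : V) (h : G.Adj x y),
        dist (p x) (p y) = (l ⟨s(x, y), G.mem_edgeSet.mpr h⟩ : ℝ)) ∧
      p (v ⟨0, by omega⟩) = q₁ ∧ p (v ⟨1, by omega⟩) = q₂ ∧
      (∀ i : Fin n, 2 ≤ i.val →
        ∀ j ∈ N i, ∀ k ∈ N i, j ≠ k → p (v j) ≠ p (v k))}.encard
      ≤ 2 ^ (n - 2) := by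
  classical
  let o := (EuclideanSpace.basisFun (Fin 2) ℝ).toBasis.orientation
  have hpick (i : Fin n) : ∃ j k, 2 ≤ i.val → j ∈ N i ∧ k ∈ N i ∧ j ≠ k := by
    by_cases hi : 2 ≤ i.val
    · obtain ⟨j, hj, k, hk, hjk⟩ := Finset.one_lt_card.mp (by rw [(hN i hi).1]; norm_num)
      exact ⟨j, k, fun _ => ⟨hj, hk, hjk⟩⟩
    · exact ⟨i, i, fun h => absurd h hi⟩
  choose j k hjk using hpick
  have hj (i : Fin n) (hi : 2 ≤ i.val) : j i < i := (hN i hi).2.1 _ (hjk i hi).1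
  have hk (i : Fin n) (hi : 2 ≤ i.val) : k i < i := (hN i hi).2.1 _ (hjk i hi).2.1
  let side (p : V → EuclideanSpace ℝ (Fin 2)) (i : {i : Fin n // 2 ≤ i.val}) : Bool :=
    decide (0 ≤ o.areaForm (p (v (k i)) - p (v (j i))) (p (v i) - p (v (j i))))
  refine (Set.encard_le_encard_of_injOn (Set.mapsTo_univ side _) ?_).trans ?_
  · rintro p ⟨hp, hp₀, hp₁, hpN⟩ q ⟨hq, hq₀, hq₁, -⟩ hpq
    suffices p ∘ v = q ∘ v from funext fun x => by simpa using congrFun this (v.symm x)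
    refine o.eq_of_eqOn_compl_of_dist_eq_of_areaForm_nonneg_iff (S := {i : Fin n | 2 ≤ i.val})
      ?_ hj hk (fun i hi => hpN i hi _ (hjk i hi).1 _ (hjk i hi).2.1 (hjk i hi).2.2)
      (fun i hi => ?_) (fun i hi => ?_) (fun i hi => decide_eq_decide.mp (congrFun hpq ⟨i, hi⟩))
    · rintro ⟨_ | _ | i, hi⟩ hbase
      · exact hp₀.trans hq₀.symm
      · exact hp₁.trans hq₁.symm
      · exact absurd hbase (by simp)
    · have hadj := ((hN i hi).2.2.1 _ (hj i hi)).mpr (hjk i hi).1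
      simp only [Function.comp_apply, hp _ _ hadj, hq _ _ hadj]
    · have hadj := ((hN i hi).2.2.1 _ (hk i hi)).mpr (hjk i hi).2.1
      simp only [Function.comp_apply, hp _ _ hadj, hq _ _ hadj]
  · rw [Set.encard_univ, ENat.card_eq_coe_fintype_card, Fintype.card_fun, Fin.card_subtype_le_val]
    simp
end

section
/- Let G = (V, E) be a complete 3-tree on n ≥ 4 vertices with ordering v₁,…,vₙ as in the definition, and let e = {u, w} ∈ E. Let p : V → EuclideanSpace ℝ (Fin 3) be a map such that every set of four vertices that induces a complete subgraph of G has affinely independent images under p. Then for every ε > 0 there exists a map q : V → EuclideanSpace ℝ (Fin 3) with dist (q x) (p x) < ε for all x ∈ V, dist (q a) (q b) = dist (p a) (p b) for every edge {a, b} ∈ E \ {e}, and dist (q u) (q w) ≠ dist (p u) (p w). -/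
/-!
Induct along the ordering, proving that the removed edge `uw` is flexible on every prefix
`v 0, …, v (k - 1)` with `k ≥ 4` that contains it. If an endpoint `u` is the newest vertex of the
prefix (or `k = 4`), all neighbours of `u` in the prefix lie in a nondegenerate 4-clique `{u, w, x, y}`, and a
small rotation of `p u` about the line through `p x` and `p y` keeps the lengths of `ux` and `uy`
while changing that of `uw`. Otherwise `uw` already lies in the previous prefix: flex it there by
a small enough amount and place the newest vertex by trilateration from its three moved
neighbours, which depends continuously on them because their tetrahedron is nondegenerate.
-/

open scoped RealInnerProductSpace
open Real Filter Topology

section Gram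

variable {E : Type*} [NormedAddCommGroup E] [InnerProductSpace ℝ E] {a b x : E} {s t : ℝ}

noncomputable def gramDet (a b : E) : ℝ := ⟪a, a⟫ * ⟪b, b⟫ - ⟪a, b⟫ ^ 2

theorem gramDet_pos (h : LinearIndependent ℝ ![a, b]) : 0 < gramDet a b := by
  have hdet := (Matrix.posDef_gram_of_linearIndependent h).det_pos
  rw [Matrix.det_fin_two] at hdet
  simpa [gramDet, Matrix.gram, sq, real_inner_comm a b] using hdet

/-- Cramer's rule: the vector of `span {a, b}` whose inner products with `a` and `b` are `s`
and `t`. -/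
noncomputable def gramSolve (a b : E) (s t : ℝ) : E :=
  ((s * ⟪b, b⟫ - t * ⟪a, b⟫) / gramDet a b) • a + ((t * ⟪a, a⟫ - s * ⟪a, b⟫) / gramDet a b) • b

theorem inner_gramSolve_left (h : gramDet a b ≠ 0) : ⟪gramSolve a b s t, a⟫ = s := by
  rw [gramSolve, inner_add_left, real_inner_smul_left, real_inner_smul_left]
  field_simp
  rw [gramDet, real_inner_comm a b]
  ring

theorem inner_gramSolve_right (h : gramDet a b ≠ 0) : ⟪gramSolve a b s t, b⟫ = t := by
  rw [gramSolve, inner_add_left, real_inner_smul_left, real_inner_smul_left]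
  field_simp
  rw [gramDet]
  ring

theorem inner_gramSolve_eq_zero (ha : ⟪x, a⟫ = 0) (hb : ⟪x, b⟫ = 0) :
    ⟪x, gramSolve a b s t⟫ = 0 := by
  simp [gramSolve, inner_add_right, real_inner_smul_right, ha, hb]

theorem gramSolve_mem_span : gramSolve a b s t ∈ Submodule.span ℝ {a, b} :=
  Submodule.add_mem _ (Submodule.smul_mem _ _ (Submodule.subset_span (by simp)))
    (Submodule.smul_mem _ _ (Submodule.subset_span (by simp)))

theorem sub_gramSolve_ne_zero (hx : x ∉ Submodule.span ℝ {a, b}) : x - gramSolve a b s t ≠ 0 :=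
  fun h => hx (sub_eq_zero.1 h ▸ gramSolve_mem_span)

@[fun_prop]
theorem ContinuousAt.gramSolve {X : Type*} [TopologicalSpace X] {a b : X → E} {s t : X → ℝ}
    {x₀ : X} (ha : ContinuousAt a x₀) (hb : ContinuousAt b x₀) (hs : ContinuousAt s x₀)
    (ht : ContinuousAt t x₀) (h : gramDet (a x₀) (b x₀) ≠ 0) :
    ContinuousAt (fun x => _root_.gramSolve (a x) (b x) (s x) (t x)) x₀ := by
  simp only [_root_.gramSolve, gramDet] at h ⊢
  fun_prop (disch := exact h)

end Gram

section Independence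

variable {k V P : Type*} [Ring k] [AddCommGroup V] [Module k V] [AddTorsor V P]

theorem AffineIndependent.linearIndependent_vsub_four {A B C D : P}
    (h : AffineIndependent k ![A, B, C, D]) : LinearIndependent k ![B -ᵥ A, C -ᵥ A, D -ᵥ A] := by
  have := ((affineIndependent_iff_linearIndependent_vsub k _ 0).1 h).comp
    (fun i : Fin 3 => (⟨i.succ, i.succ_ne_zero⟩ : {x : Fin 4 // x ≠ 0}))
    fun i j hij => Fin.succ_injective _ (congrArg Subtype.val hij)
  convert this using 1
  ext i
  fin_cases i <;> rfl

theorem AffineIndependent.vecCons_of_mem {ι : Type*} {K : Finset ι} {p : ι → P}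
    (h : AffineIndependent k fun z : K => p z) {a b c d : ι} (ha : a ∈ K) (hb : b ∈ K)
    (hc : c ∈ K) (hd : d ∈ K) (hab : a ≠ b) (hac : a ≠ c) (had : a ≠ d) (hbc : b ≠ c)
    (hbd : b ≠ d) (hcd : c ≠ d) : AffineIndependent k ![p a, p b, p c, p d] := by
  have hinj : Function.Injective ![a, b, c, d] := by
    intro i j hij
    fin_cases i <;> fin_cases j <;> simp_all [eq_comm]
  have := h.comp_embedding ⟨fun i => ⟨![a, b, c, d] i, by fin_cases i <;> assumption⟩,
    fun i j hij => hinj (congrArg Subtype.val hij)⟩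
  convert this using 1
  ext i
  fin_cases i <;> rfl

theorem LinearIndependent.notMem_span_pair {K M : Type*} [DivisionRing K] [AddCommGroup M]
    [Module K M] {a b c : M} (h : LinearIndependent K ![a, b, c]) :
    a ∉ Submodule.span K {b, c} := by
  simpa [Set.pair_comm] using (linearIndependent_finCons.1 h).2

end Independence

section Rotation

variable {E : Type*} [NormedAddCommGroup E] [InnerProductSpace ℝ E] {v m : E}

theorem norm_add_rotation (hvm : ⟪v, m⟫ = 0) (hnorm : ‖m‖ = ‖v‖) {x : E} (hxv : ⟪x, v⟫ = 0)
    (hxm : ⟪x, m⟫ = 0) (θ : ℝ) : ‖x + (cos θ • v + sin θ • m)‖ = ‖x + v‖ := by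
  have hmm : ⟪m, m⟫ = ⟪v, v⟫ := by
    rw [real_inner_self_eq_norm_sq, real_inner_self_eq_norm_sq, hnorm]
  rw [← sq_eq_sq₀ (norm_nonneg _) (norm_nonneg _), ← real_inner_self_eq_norm_sq,
    ← real_inner_self_eq_norm_sq]
  simp only [inner_add_left, inner_add_right, real_inner_smul_left, real_inner_smul_right,
    real_inner_comm x, real_inner_comm v m, hvm, hxv, hxm, hmm]
  linear_combination ⟪v, v⟫ * cos_sq_add_sin_sq θ

theorem norm_add_rotation_sq_sub_neg (hvm : ⟪v, m⟫ = 0) (y : E) (θ : ℝ) :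
    ‖y + (cos θ • v + sin θ • m)‖ ^ 2 - ‖y + (cos (-θ) • v + sin (-θ) • m)‖ ^ 2
      = 4 * sin θ * ⟪y, m⟫ := by
  rw [← real_inner_self_eq_norm_sq, ← real_inner_self_eq_norm_sq]
  simp only [inner_add_left, inner_add_right, real_inner_smul_left, real_inner_smul_right,
    real_inner_comm y, real_inner_comm v m, hvm, cos_neg, sin_neg]
  ring

theorem exists_near_rotation_about_line {A W D a : E} (c : ℝ) (hD : D = A + c • a + v)
    (hav : ⟪a, v⟫ = 0) (ham : ⟪a, m⟫ = 0) (hvm : ⟪v, m⟫ = 0) (hnorm : ‖m‖ = ‖v‖)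
    (hWm : ⟪W - A, m⟫ ≠ 0) {ε : ℝ} (hε : 0 < ε) :
    ∃ D', dist D' D < ε ∧ (∀ t : ℝ, dist D' (A + t • a) = dist D (A + t • a)) ∧
      dist D' W ≠ dist D W := by
  set P : ℝ → E := fun θ => A + c • a + (cos θ • v + sin θ • m) with hP
  have hP0 : P 0 = D := by simp [hP, hD]
  have hPcont : Continuous P := by fun_prop
  have hnear : ∀ᶠ θ in 𝓝 0, dist (P θ) D < ε ∧ dist (P (-θ)) D < ε := by
    have h₁ := hPcont.tendsto 0
    have h₂ := (hPcont.comp continuous_neg).tendsto 0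
    simp only [Function.comp_def, neg_zero, hP0] at h₁ h₂
    exact (h₁.eventually (Metric.ball_mem_nhds D hε)).and
      (h₂.eventually (Metric.ball_mem_nhds D hε))
  have hsin : ∀ᶠ θ in 𝓝[>] 0, 0 < sin θ :=
    mem_of_superset (Ioo_mem_nhdsGT pi_pos) fun θ hθ => sin_pos_of_pos_of_lt_pi hθ.1 hθ.2
  obtain ⟨θ, ⟨hθ, hθ'⟩, hsinθ⟩ := ((eventually_nhdsWithin_of_eventually_nhds hnear).and hsin).exists
  have haxis : ∀ φ t : ℝ, dist (P φ) (A + t • a) = dist D (A + t • a) := by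
    intro φ t
    have hx : A + c • a - (A + t • a) = (c - t) • a := by rw [sub_smul]; abel
    rw [dist_eq_norm, dist_eq_norm, hD, hP, add_sub_right_comm, hx, add_sub_right_comm _ v, hx,
      norm_add_rotation hvm hnorm (by simp [real_inner_smul_left, hav])
        (by simp [real_inner_smul_left, ham])]
  -- Rotating by `θ` and by `-θ` changes the squared distance to `W` by different amounts.
  have hW : dist (P θ) W ^ 2 - dist (P (-θ)) W ^ 2 = -(4 * sin θ * ⟪W - A, m⟫) := by
    have hPW : ∀ φ, P φ - W = (A + c • a - W) + (cos φ • v + sin φ • m) := fun φ => by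
      simp only [hP]; abel
    rw [dist_eq_norm, dist_eq_norm, hPW, hPW, norm_add_rotation_sq_sub_neg hvm]
    simp only [inner_sub_left, inner_add_left, real_inner_smul_left, ham, mul_zero, add_zero]
    ring
  by_cases hθW : dist (P θ) W = dist D W
  · refine ⟨P (-θ), hθ', haxis _, fun h => ?_⟩
    rw [hθW, h, sub_self, zero_eq_neg] at hW
    exact hWm (by simpa [hsinθ.ne'] using hW)
  · exact ⟨P θ, hθ, haxis _, hθW⟩

/-- `v` is the component of `d` orthogonal to `a`, and `m` the component of `w` orthogonal to
`span {a, d}`, rescaled to the length of `v`. -/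
theorem exists_rotation_frame {w a d : E} (h : LinearIndependent ℝ ![w, a, d]) :
    ∃ (c : ℝ) (v m : E), d = c • a + v ∧ ⟪a, v⟫ = 0 ∧ ⟪a, m⟫ = 0 ∧ ⟪v, m⟫ = 0 ∧
      ‖m‖ = ‖v‖ ∧ ⟪w, m⟫ ≠ 0 := by
  have had : LinearIndependent ℝ ![a, d] := (linearIndependent_finCons.1 h).1
  have ha : ⟪a, a⟫ ≠ 0 := inner_self_ne_zero.2 (had.ne_zero 0)
  have hΔ : gramDet a d ≠ 0 := (gramDet_pos had).ne'
  set c := ⟪a, d⟫ / ⟪a, a⟫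
  set v := d - c • a with hv
  have hav : ⟪a, v⟫ = 0 := by
    simp only [v, c, inner_sub_right, real_inner_smul_right, div_mul_cancel₀ _ ha, sub_self]
  have hv0 : v ≠ 0 := fun h0 =>
    one_ne_zero (LinearIndependent.pair_iff.1 had (-c) 1 (by rw [← h0, hv]; module)).2
  set g := gramSolve a d ⟪w, a⟫ ⟪w, d⟫
  set m' := w - g with hm'
  have ham' : ⟪a, m'⟫ = 0 := by
    rw [hm', inner_sub_right, real_inner_comm g a, inner_gramSolve_left hΔ, real_inner_comm,
      sub_self]
  have hdm' : ⟪d, m'⟫ = 0 := by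
    rw [hm', inner_sub_right, real_inner_comm g d, inner_gramSolve_right hΔ, real_inner_comm,
      sub_self]
  have hvm' : ⟪v, m'⟫ = 0 := by
    rw [hv, inner_sub_left, real_inner_smul_left, ham', hdm', mul_zero, sub_zero]
  have hm'0 : 0 < ‖m'‖ := norm_pos_iff.2 (sub_gramSolve_ne_zero h.notMem_span_pair)
  have hwm' : ⟪w, m'⟫ = ‖m'‖ ^ 2 := by
    have hgm' : ⟪g, m'⟫ = 0 := by
      rw [real_inner_comm]
      exact inner_gramSolve_eq_zero (by rw [real_inner_comm, ham']) (by rw [real_inner_comm, hdm'])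
    rw [← real_inner_self_eq_norm_sq, show w = m' + g by rw [hm']; abel, inner_add_left, hgm',
      add_zero]
  refine ⟨c, v, (‖v‖ / ‖m'‖) • m', by rw [hv]; abel, hav, ?_, ?_, ?_, ?_⟩
  · rw [real_inner_smul_right, ham', mul_zero]
  · rw [real_inner_smul_right, hvm', mul_zero]
  · rw [norm_smul, Real.norm_of_nonneg (by positivity), div_mul_cancel₀ _ hm'0.ne']
  · rw [real_inner_smul_right, hwm']
    have := norm_pos_iff.2 hv0
    positivity

theorem AffineIndependent.exists_near_rotation {A W B D : E}
    (h : AffineIndependent ℝ ![A, W, B, D]) {ε : ℝ} (hε : 0 < ε) :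
    ∃ D', dist D' D < ε ∧ dist D' A = dist D A ∧ dist D' B = dist D B ∧ dist D' W ≠ dist D W := by
  have hli : LinearIndependent ℝ ![W - A, B - A, D - A] := h.linearIndependent_vsub_four
  obtain ⟨c, v, m, hd, hav, ham, hvm, hnorm, hWm⟩ := exists_rotation_frame hli
  obtain ⟨D', hD', haxis, hW⟩ := exists_near_rotation_about_line (A := A) (W := W) c
    (by rw [add_assoc, ← hd, add_sub_cancel]) hav ham hvm hnorm hWm hε
  exact ⟨D', hD', by simpa using haxis 0, by simpa using haxis 1, hW⟩

end Rotation

section Trilateration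

variable {E : Type*} [NormedAddCommGroup E] [InnerProductSpace ℝ E]

/-- By the law of cosines, every point at squared distances `s₁, s₂, s₃` from `A, B, C` projects
onto the plane `ABC` at `A + planeFoot s₁ s₂ s₃ A B C`. -/
noncomputable def planeFoot (s₁ s₂ s₃ : ℝ) (A B C : E) : E :=
  gramSolve (B - A) (C - A) ((s₁ - s₂ + ‖B - A‖ ^ 2) / 2) ((s₁ - s₃ + ‖C - A‖ ^ 2) / 2)

noncomputable def planeNormal (e A B C : E) : E :=
  e - gramSolve (B - A) (C - A) ⟪e, B - A⟫ ⟪e, C - A⟫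

/-- The point at squared distances `s₁, s₂, s₃` from `A, B, C` on the side of the plane `ABC`
towards which `e` points. -/
noncomputable def trilaterate (e : E) (s₁ s₂ s₃ : ℝ) (A B C : E) : E :=
  A + planeFoot s₁ s₂ s₃ A B C +
    (√(s₁ - ‖planeFoot s₁ s₂ s₃ A B C‖ ^ 2) / ‖planeNormal e A B C‖) • planeNormal e A B C

variable {e A B C D : E} {s₁ s₂ s₃ : ℝ}

theorem inner_planeNormal_left (h : gramDet (B - A) (C - A) ≠ 0) :
    ⟪planeNormal e A B C, B - A⟫ = 0 := by
  rw [planeNormal, inner_sub_left, inner_gramSolve_left h, sub_self]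

theorem inner_planeNormal_right (h : gramDet (B - A) (C - A) ≠ 0) :
    ⟪planeNormal e A B C, C - A⟫ = 0 := by
  rw [planeNormal, inner_sub_left, inner_gramSolve_right h, sub_self]

theorem dist_sq_trilaterate (hΔ : gramDet (B - A) (C - A) ≠ 0) (hn : planeNormal e A B C ≠ 0)
    (hs : ‖planeFoot s₁ s₂ s₃ A B C‖ ^ 2 ≤ s₁) :
    dist (trilaterate e s₁ s₂ s₃ A B C) A ^ 2 = s₁ ∧
      dist (trilaterate e s₁ s₂ s₃ A B C) B ^ 2 = s₂ ∧
      dist (trilaterate e s₁ s₂ s₃ A B C) C ^ 2 = s₃ := by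
  set f := planeFoot s₁ s₂ s₃ A B C with hf
  set n := planeNormal e A B C
  set z := √(s₁ - ‖f‖ ^ 2) / ‖n‖
  have hnB : ⟪n, B - A⟫ = 0 := inner_planeNormal_left hΔ
  have hnC : ⟪n, C - A⟫ = 0 := inner_planeNormal_right hΔ
  have hX : trilaterate e s₁ s₂ s₃ A B C - A = f + z • n := by
    rw [trilaterate]; abel
  have hXA : ‖f + z • n‖ ^ 2 = s₁ := by
    have hfn : ⟪f, n⟫ = 0 := by
      rw [real_inner_comm]; exact inner_gramSolve_eq_zero hnB hnC
    have hz : z ^ 2 * ‖n‖ ^ 2 = s₁ - ‖f‖ ^ 2 := by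
      rw [div_pow, Real.sq_sqrt (by linarith), div_mul_cancel₀ _ (by positivity)]
    rw [norm_add_sq_real, real_inner_smul_right, hfn, norm_smul, mul_pow, Real.norm_eq_abs,
      sq_abs, hz]
    ring
  have hlaw : ∀ P, ‖f + z • n - (P - A)‖ ^ 2 = s₁ - 2 * ⟪f + z • n, P - A⟫ + ‖P - A‖ ^ 2 := by
    intro P; rw [norm_sub_sq_real, hXA]
  refine ⟨by rw [dist_eq_norm, hX, hXA], ?_, ?_⟩
  · rw [dist_eq_norm, show trilaterate e s₁ s₂ s₃ A B C - B = f + z • n - (B - A) by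
      rw [← hX]; abel, hlaw, inner_add_left, real_inner_smul_left, hnB, hf, planeFoot,
      inner_gramSolve_left hΔ]
    ring
  · rw [dist_eq_norm, show trilaterate e s₁ s₂ s₃ A B C - C = f + z • n - (C - A) by
      rw [← hX]; abel, hlaw, inner_add_left, real_inner_smul_left, hnC, hf, planeFoot,
      inner_gramSolve_right hΔ]
    ring

theorem planeFoot_self :
    planeFoot (dist D A ^ 2) (dist D B ^ 2) (dist D C ^ 2) A B C
      = D - A - planeNormal (D - A) A B C := by
  have key : ∀ P, (dist D A ^ 2 - dist D P ^ 2 + ‖P - A‖ ^ 2) / 2 = ⟪D - A, P - A⟫ := by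
    intro P
    rw [dist_eq_norm, dist_eq_norm, show D - P = D - A - (P - A) by abel,
      norm_sub_sq_real (x := D - A)]
    ring
  rw [planeFoot, planeNormal, key, key, sub_sub_cancel]

theorem norm_sq_planeNormal_self (hΔ : gramDet (B - A) (C - A) ≠ 0) :
    ‖planeNormal (D - A) A B C‖ ^ 2
      = dist D A ^ 2 - ‖planeFoot (dist D A ^ 2) (dist D B ^ 2) (dist D C ^ 2) A B C‖ ^ 2 := by
  set n := planeNormal (D - A) A B C with hn
  have hfn : ⟪D - A - n, n⟫ = 0 := by
    rw [hn, planeNormal, sub_sub_cancel, real_inner_comm]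
    exact inner_gramSolve_eq_zero (inner_planeNormal_left hΔ) (inner_planeNormal_right hΔ)
  rw [planeFoot_self, ← hn, dist_eq_norm, ← sub_add_cancel (D - A) n, norm_add_sq_real, hfn,
    add_sub_cancel_right]
  ring

theorem trilaterate_self (hΔ : gramDet (B - A) (C - A) ≠ 0) (hn : planeNormal (D - A) A B C ≠ 0) :
    trilaterate (D - A) (dist D A ^ 2) (dist D B ^ 2) (dist D C ^ 2) A B C = D := by
  rw [trilaterate, ← norm_sq_planeNormal_self hΔ, Real.sqrt_sq (norm_nonneg _),
    div_self (norm_ne_zero_iff.2 hn), one_smul, planeFoot_self]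
  abel

theorem continuousAt_trilaterate (hΔ : gramDet (B - A) (C - A) ≠ 0)
    (hn : planeNormal e A B C ≠ 0) :
    ContinuousAt (fun P : E × E × E => trilaterate e s₁ s₂ s₃ P.1 P.2.1 P.2.2) (A, B, C) := by
  have hn' := norm_ne_zero_iff.2 hn
  simp only [trilaterate, planeFoot, planeNormal] at hn' ⊢
  fun_prop (disch := first | exact hΔ | exact hn')

theorem AffineIndependent.exists_near_trilateration (h : AffineIndependent ℝ ![A, D, B, C])
    {ε : ℝ} (hε : 0 < ε) :
    ∃ δ > 0, ∀ A' B' C', dist A' A < δ → dist B' B < δ → dist C' C < δ →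
      ∃ D', dist D' D < ε ∧ dist D' A' = dist D A ∧ dist D' B' = dist D B ∧
        dist D' C' = dist D C := by
  have hli : LinearIndependent ℝ ![D - A, B - A, C - A] := h.linearIndependent_vsub_four
  have hΔ : gramDet (B - A) (C - A) ≠ 0 := (gramDet_pos (linearIndependent_finCons.1 hli).1).ne'
  have hn : planeNormal (D - A) A B C ≠ 0 := sub_gramSolve_ne_zero hli.notMem_span_pair
  have hfoot :
      ‖planeFoot (dist D A ^ 2) (dist D B ^ 2) (dist D C ^ 2) A B C‖ ^ 2 < dist D A ^ 2 := by
    have := norm_sq_planeNormal_self (D := D) hΔ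
    have := norm_pos_iff.2 hn
    nlinarith
  have hΔc : ContinuousAt (fun P : E × E × E => gramDet (P.2.1 - P.1) (P.2.2 - P.1)) (A, B, C) := by
    simp only [gramDet]; fun_prop
  have hnc : ContinuousAt (fun P : E × E × E => planeNormal (D - A) P.1 P.2.1 P.2.2) (A, B, C) := by
    simp only [planeNormal]; fun_prop (disch := exact hΔ)
  have hfc : ContinuousAt (fun P : E × E × E =>
      ‖planeFoot (dist D A ^ 2) (dist D B ^ 2) (dist D C ^ 2) P.1 P.2.1 P.2.2‖ ^ 2) (A, B, C) := by
    simp only [planeFoot]; fun_prop (disch := exact hΔ)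
  have hnear := (continuousAt_trilaterate (s₁ := dist D A ^ 2) (s₂ := dist D B ^ 2)
      (s₃ := dist D C ^ 2) hΔ hn).eventually (Metric.ball_mem_nhds _ hε)
  dsimp only at hnear
  rw [trilaterate_self hΔ hn] at hnear
  obtain ⟨δ, hδ, hball⟩ := Metric.eventually_nhds_iff.1 <|
    (hΔc.eventually_ne hΔ).and <| (hnc.eventually_ne hn).and <|
      (hfc.eventually_lt continuousAt_const hfoot).and hnear
  refine ⟨δ, hδ, fun A' B' C' hA hB hC => ?_⟩
  obtain ⟨hΔ', hn', hfoot', hnear'⟩ :=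
    hball (show dist (A', B', C') (A, B, C) < δ by simp [Prod.dist_eq, hA, hB, hC])
  obtain ⟨h₁, h₂, h₃⟩ := dist_sq_trilaterate hΔ' hn' hfoot'.le
  exact ⟨_, hnear', by simpa using h₁, by simpa using h₂, by simpa using h₃⟩

end Trilateration

section Flexibility

variable {V P : Type*} [PseudoMetricSpace P]

def EdgeFlexibleOn (G : SimpleGraph V) (p : V → P) (S : Set V) (u w : V) : Prop :=
  ∀ ε > 0, ∃ q : V → P, (∀ x ∈ S, dist (q x) (p x) < ε) ∧
    (∀ a ∈ S, ∀ b ∈ S, G.Adj a b → s(a, b) ≠ s(u, w) → dist (q a) (q b) = dist (p a) (p b)) ∧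
    dist (q u) (q w) ≠ dist (p u) (p w)

variable {G : SimpleGraph V} {p : V → P} {S T : Set V} {u w : V}

theorem EdgeFlexibleOn.mono (h : EdgeFlexibleOn G p S u w) (hTS : T ⊆ S) :
    EdgeFlexibleOn G p T u w := fun ε hε =>
  let ⟨q, hq, hqe, hne⟩ := h ε hε
  ⟨q, fun x hx => hq x (hTS hx), fun a ha b hb => hqe a (hTS ha) b (hTS hb), hne⟩

theorem EdgeFlexibleOn.symm (h : EdgeFlexibleOn G p S u w) : EdgeFlexibleOn G p S w u :=
  fun ε hε =>
  let ⟨q, hq, hqe, hne⟩ := h ε hε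
  ⟨q, hq, fun a ha b hb hab hs => hqe a ha b hb hab (fun h => hs (h.trans Sym2.eq_swap)),
    by rwa [dist_comm, dist_comm (p w)]⟩

theorem dist_update_eq_of_adj [DecidableEq V] {q : V → P} {d : V} {D' : P}
    (hd : ∀ z ∈ S, G.Adj d z → s(d, z) ≠ s(u, w) → dist D' (q z) = dist (p d) (p z))
    (hS : ∀ a ∈ S, ∀ b ∈ S, G.Adj a b → s(a, b) ≠ s(u, w) → a ≠ d → b ≠ d →
      dist (q a) (q b) = dist (p a) (p b))
    {a b : V} (ha : a ∈ insert d S) (hb : b ∈ insert d S) (hab : G.Adj a b)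
    (hs : s(a, b) ≠ s(u, w)) :
    dist (Function.update q d D' a) (Function.update q d D' b) = dist (p a) (p b) := by
  rcases eq_or_ne a d with rfl | had
  · rw [Function.update_self, Function.update_of_ne hab.ne']
    exact hd b (hb.resolve_left hab.ne') hab hs
  rcases eq_or_ne b d with rfl | hbd
  · rw [Function.update_self, Function.update_of_ne had, dist_comm, dist_comm (p a)]
    exact hd a (ha.resolve_left had) hab.symm (fun h => hs (Sym2.eq_swap.trans h))
  rw [Function.update_of_ne had, Function.update_of_ne hbd]
  exact hS a (ha.resolve_left had) b (hb.resolve_left hbd) hab hs had hbd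

end Flexibility

section LocalMoves

variable {V E : Type*} [NormedAddCommGroup E] [InnerProductSpace ℝ E] {G : SimpleGraph V}
  {p : V → E} {S : Set V} {u w : V}

theorem edgeFlexibleOn_of_neighbors {x y : V} (h : AffineIndependent ℝ ![p x, p w, p y, p u])
    (hnb : ∀ z ∈ S, G.Adj u z → z = w ∨ z = x ∨ z = y) : EdgeFlexibleOn G p S u w := by
  classical
  intro ε hε
  have hwu : w ≠ u := fun h' => h.injective.ne (show (1 : Fin 4) ≠ 3 by decide) (by simp [h'])
  obtain ⟨D', hD', hDx, hDy, hDw⟩ := h.exists_near_rotation hε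
  refine ⟨Function.update p u D', fun z _ => ?_, fun a ha b hb hab hs =>
    dist_update_eq_of_adj ?_ (fun _ _ _ _ _ _ _ _ => rfl) (Set.mem_insert_of_mem u ha)
      (Set.mem_insert_of_mem u hb) hab hs, ?_⟩
  · rcases eq_or_ne z u with rfl | hz
    · rwa [Function.update_self]
    · rwa [Function.update_of_ne hz, dist_self]
  · intro z hz hadj hs
    rcases hnb z hz hadj with rfl | rfl | rfl
    · exact absurd rfl hs
    · exact hDx
    · exact hDy
  · rwa [Function.update_self, Function.update_of_ne hwu]

theorem EdgeFlexibleOn.of_clique {K : Finset V} (hK : K.card = 4)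
    (hind : AffineIndependent ℝ fun z : K => p z) (hu : u ∈ K) (hw : w ∈ K) (huw : u ≠ w)
    (hnb : ∀ z ∈ S, G.Adj u z → z ∈ K) : EdgeFlexibleOn G p S u w := by
  classical
  have hcard : ((K.erase u).erase w).card = 2 := by
    rw [Finset.card_erase_of_mem (Finset.mem_erase.2 ⟨huw.symm, hw⟩), Finset.card_erase_of_mem hu,
      hK]
  obtain ⟨x, y, hxy, hxy'⟩ := Finset.card_eq_two.1 hcard
  have hx : x ∈ (K.erase u).erase w := by simp [hxy']
  have hy : y ∈ (K.erase u).erase w := by simp [hxy']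
  simp only [Finset.mem_erase] at hx hy
  refine edgeFlexibleOn_of_neighbors (hind.vecCons_of_mem hx.2.2 hw hy.2.2 hu hx.1 hxy hx.2.1
    hy.1.symm huw.symm hy.2.1) fun z hz hadj => ?_
  by_cases hzw : z = w
  · exact Or.inl hzw
  · have hz' : z ∈ (K.erase u).erase w := by simp [hzw, hadj.ne', hnb z hz hadj]
    rw [hxy', Finset.mem_insert, Finset.mem_singleton] at hz'
    exact Or.inr hz'

theorem EdgeFlexibleOn.insert_of_clique (h : EdgeFlexibleOn G p S u w) {K : Finset V} {d : V}
    (hK : K.card = 4) (hind : AffineIndependent ℝ fun z : K => p z) (hd : d ∈ K)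
    (hKS : ∀ z ∈ K, z ≠ d → z ∈ S) (hnb : ∀ z ∈ S, G.Adj d z → z ∈ K) (hud : u ≠ d)
    (hwd : w ≠ d) : EdgeFlexibleOn G p (insert d S) u w := by
  classical
  have hcard : (K.erase d).card = 3 := by rw [Finset.card_erase_of_mem hd, hK]
  obtain ⟨a, b, c, hab, hac, hbc, habc⟩ := Finset.card_eq_three.1 hcard
  have ha : a ∈ K.erase d := by simp [habc]
  have hb : b ∈ K.erase d := by simp [habc]
  have hc : c ∈ K.erase d := by simp [habc]
  simp only [Finset.mem_erase] at ha hb hc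
  intro ε hε
  obtain ⟨δ, hδ, htri⟩ := (hind.vecCons_of_mem ha.2 hd hb.2 hc.2 ha.1 hab hac hb.1.symm
    hc.1.symm hbc).exists_near_trilateration hε
  obtain ⟨q, hq, hqe, hne⟩ := h (min ε δ) (lt_min hε hδ)
  have hqδ : ∀ z ∈ S, dist (q z) (p z) < δ := fun z hz => (hq z hz).trans_le (min_le_right _ _)
  obtain ⟨D', hD', hDa, hDb, hDc⟩ :=
    htri (q a) (q b) (q c) (hqδ a (hKS a ha.2 ha.1)) (hqδ b (hKS b hb.2 hb.1))
      (hqδ c (hKS c hc.2 hc.1))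
  refine ⟨Function.update q d D', fun z hz => ?_, fun x hx y hy hxy hs =>
    dist_update_eq_of_adj (fun z hz hadj _ => ?_) (fun x hx y hy hxy hs _ _ => hqe x hx y hy hxy hs)
      hx hy hxy hs, by rwa [Function.update_of_ne hud, Function.update_of_ne hwd]⟩
  · rcases eq_or_ne z d with rfl | hzd
    · rwa [Function.update_self]
    · rw [Function.update_of_ne hzd]
      exact (hq z (hz.resolve_left hzd)).trans_le (min_le_left _ _)
  · have hz' : z ∈ K.erase d := Finset.mem_erase.2 ⟨hadj.ne', hnb z hz hadj⟩
    rw [habc] at hz'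
    simp only [Finset.mem_insert, Finset.mem_singleton] at hz'
    rcases hz' with rfl | rfl | rfl
    · exact hDa
    · exact hDb
    · exact hDc

end LocalMoves

section ThreeTree

variable {V : Type*} {n : ℕ}

def EarlierNeighborsAreTriangles (G : SimpleGraph V) (v : Fin n ≃ V) : Prop :=
  ∀ i : Fin n, 3 ≤ i.val →
    ∃ N : Finset (Fin n), N.card = 3 ∧ (∀ j ∈ N, j < i) ∧
      (∀ j : Fin n, j < i → (G.Adj (v i) (v j) ↔ j ∈ N)) ∧
      (∀ j ∈ N, ∀ k ∈ N, j ≠ k → G.Adj (v j) (v k))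

variable {G : SimpleGraph V} {v : Fin n ≃ V}

theorem EarlierNeighborsAreTriangles.exists_clique (h : EarlierNeighborsAreTriangles G v)
    (i : Fin n) (hi : 3 ≤ i.val) :
    ∃ K : Finset V, K.card = 4 ∧ G.IsClique (K : Set V) ∧ v i ∈ K ∧ (∀ z ∈ K, v.symm z ≤ i) ∧
      ∀ z, v.symm z < i → G.Adj (v i) z → z ∈ K := by
  classical
  obtain ⟨N, hN, hlt, hadj, hclique⟩ := h i hi
  have hnot : v i ∉ N.map v.toEmbedding := by
    simp only [Finset.mem_map_equiv, Equiv.symm_apply_apply]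
    exact fun hi' => (hlt i hi').false
  refine ⟨insert (v i) (N.map v.toEmbedding), ?_, ?_, Finset.mem_insert_self _ _, ?_, ?_⟩
  · rw [Finset.card_insert_of_notMem hnot, Finset.card_map, hN]
  · rw [Finset.coe_insert, SimpleGraph.isClique_insert, Finset.coe_map]
    refine ⟨?_, ?_⟩
    · rintro _ ⟨j, hj, rfl⟩ _ ⟨k, hk, rfl⟩ hjk
      exact hclique j hj k hk (fun h => hjk (h ▸ rfl))
    · rintro _ ⟨j, hj, rfl⟩ _
      exact (hadj j (hlt j hj)).2 hj
  · intro z hz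
    rcases Finset.mem_insert.1 hz with rfl | hz
    · simp
    · exact (hlt _ (Finset.mem_map_equiv.1 hz)).le
  · intro z hz hiz
    refine Finset.mem_insert_of_mem (Finset.mem_map_equiv.2 ((hadj _ hz).1 ?_))
    simpa using hiz

theorem mem_of_card_le_of_forall_lt {α : Type*} {f : α → ℕ} (hf : Function.Injective f)
    {K : Finset α} {k : ℕ} (hK : k ≤ K.card) (hKf : ∀ z ∈ K, f z < k) {z : α} (hz : f z < k) :
    z ∈ K := by
  classical
  have himage : K.image f = Finset.range k :=
    Finset.eq_of_subset_of_card_le (fun m hm => by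
      obtain ⟨x, hx, rfl⟩ := Finset.mem_image.1 hm
      exact Finset.mem_range.2 (hKf x hx))
      (by rwa [Finset.card_range, Finset.card_image_of_injective _ hf])
  obtain ⟨x, hx, hxz⟩ := Finset.mem_image.1 (himage ▸ Finset.mem_range.2 hz)
  exact hf hxz ▸ hx

theorem EarlierNeighborsAreTriangles.edgeFlexibleOn_prefix {E : Type*} [NormedAddCommGroup E]
    [InnerProductSpace ℝ E] {p : V → E} (hG : EarlierNeighborsAreTriangles G v)
    (hgen : ∀ K : Finset V, K.card = 4 → G.IsClique (K : Set V) →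
      AffineIndependent ℝ fun z : K => p z)
    {k : ℕ} (hk : 4 ≤ k) (hkn : k ≤ n) {u w : V} (huw : G.Adj u w) (hu : (v.symm u : ℕ) < k)
    (hw : (v.symm w : ℕ) < k) : EdgeFlexibleOn G p {z | (v.symm z : ℕ) < k} u w := by
  induction k, hk using Nat.le_induction generalizing u w with
  | base =>
    obtain ⟨K, hK, hKc, -, hle, -⟩ := hG.exists_clique ⟨3, by omega⟩ le_rfl
    have hsub : ∀ z, (v.symm z : ℕ) < 4 → z ∈ K :=
      fun z hz => mem_of_card_le_of_forall_lt (Fin.val_injective.comp v.symm.injective) hK.ge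
        (fun x hx => Nat.lt_succ_of_le (hle x hx)) hz
    exact .of_clique hK (hgen K hK hKc) (hsub u hu) (hsub w hw) huw.ne fun z hz _ => hsub z hz
  | succ k hk ih =>
    set i : Fin n := ⟨k, by omega⟩
    obtain ⟨K, hK, hKc, hiK, hle, hback⟩ := hG.exists_clique i (show 3 ≤ k by omega)
    have hind := hgen K hK hKc
    have hlt : ∀ z, z ≠ v i → (v.symm z : ℕ) ≤ k → (v.symm z : ℕ) < k := by
      intro z hz hzk
      refine lt_of_le_of_ne hzk fun h => hz ?_
      rw [← v.apply_symm_apply z, show v.symm z = i from Fin.ext h]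
    have hnb : ∀ z, (v.symm z : ℕ) < k + 1 → G.Adj (v i) z → z ∈ K :=
      fun z hz hadj => hback z (hlt z hadj.ne' (Nat.le_of_lt_succ hz)) hadj
    by_cases hui : u = v i
    · rw [hui] at huw ⊢
      exact .of_clique hK hind hiK (hnb w hw huw) huw.ne fun z hz => hnb z hz
    by_cases hwi : w = v i
    · rw [hwi] at huw ⊢
      exact (EdgeFlexibleOn.of_clique hK hind hiK (hnb u hu huw.symm) huw.ne'
        fun z hz => hnb z hz).symm
    have hprev := ih (by omega) huw (hlt u hui (Nat.le_of_lt_succ hu))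
      (hlt w hwi (Nat.le_of_lt_succ hw))
    refine (hprev.insert_of_clique hK hind hiK (fun z hz hzi => hlt z hzi (hle z hz))
      (fun z hz => hnb z (Nat.lt_succ_of_lt hz)) hui hwi).mono fun z hz => ?_
    by_cases hzi : z = v i
    · exact Or.inl hzi
    · exact Or.inr (hlt z hzi (Nat.le_of_lt_succ hz))

end ThreeTree

theorem complete3Tree_remove_edge_flexible_general
    {V : Type*} {n : ℕ} (hn : 4 ≤ n)
    (G : SimpleGraph V) (v : Fin n ≃ V)
    (h3tree : ∀ i : Fin n, 3 ≤ i.val →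
      ∃ N : Finset (Fin n), N.card = 3 ∧ (∀ j ∈ N, j < i) ∧
        (∀ j : Fin n, j < i → (G.Adj (v i) (v j) ↔ j ∈ N)) ∧
        (∀ j ∈ N, ∀ k ∈ N, j ≠ k → G.Adj (v j) (v k)))
    (u w : V) (huw : G.Adj u w)
    (p : V → EuclideanSpace ℝ (Fin 3))
    (hgen : ∀ S : Finset V, S.card = 4 →
      (∀ a ∈ S, ∀ b ∈ S, a ≠ b → G.Adj a b) →
      AffineIndependent ℝ (fun x : {x // x ∈ S} => p x.1))
    (ε : ℝ) (hε : 0 < ε) :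
    ∃ q : V → EuclideanSpace ℝ (Fin 3),
      (∀ x : V, dist (q x) (p x) < ε) ∧
      (∀ a b : V, G.Adj a b → s(a, b) ≠ s(u, w) →
        dist (q a) (q b) = dist (p a) (p b)) ∧
      dist (q u) (q w) ≠ dist (p u) (p w) := by
  obtain ⟨q, hq, hqe, hne⟩ := EarlierNeighborsAreTriangles.edgeFlexibleOn_prefix h3tree hgen hn
    le_rfl huw (v.symm u).isLt (v.symm w).isLt ε hε
  exact ⟨q, fun x => hq x (v.symm x).isLt,
    fun a b hab => hqe a (v.symm a).isLt b (v.symm b).isLt hab, hne⟩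

/-- Removing any edge from a complete 3-tree yields a flexible linkage: near
any realization `p` in which every 4-clique of the graph has affinely
independent images, one can perturb the configuration so that all edge lengths
other than that of the removed edge `{u, w}` are preserved, while the length of
`{u, w}` changes. Here `v : Fin n ≃ V` is the 3-tree ordering. -/
theorem complete3Tree_remove_edge_flexible
    {V : Type*} [Fintype V] {n : ℕ} (hn : 4 ≤ n)
    (G : SimpleGraph V) (v : Fin n ≃ V)
    (htri : ∀ i j : Fin n, i.val < 3 → j.val < 3 → i ≠ j → G.Adj (v i) (v j))
    (h3tree : ∀ i : Fin n, 3 ≤ i.val →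
      ∃ N : Finset (Fin n), N.card = 3 ∧ (∀ j ∈ N, j < i) ∧
        (∀ j : Fin n, j < i → (G.Adj (v i) (v j) ↔ j ∈ N)) ∧
        (∀ j ∈ N, ∀ k ∈ N, j ≠ k → G.Adj (v j) (v k)))
    (u w : V) (huw : G.Adj u w)
    (p : V → EuclideanSpace ℝ (Fin 3))
    (hgen : ∀ S : Finset V, S.card = 4 →
      (∀ a ∈ S, ∀ b ∈ S, a ≠ b → G.Adj a b) →
      AffineIndependent ℝ (fun x : {x // x ∈ S} => p x.1))
    (ε : ℝ) (hε : 0 < ε) :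
    ∃ q : V → EuclideanSpace ℝ (Fin 3),
      (∀ x : V, dist (q x) (p x) < ε) ∧
      (∀ a b : V, G.Adj a b → s(a, b) ≠ s(u, w) →
        dist (q a) (q b) = dist (p a) (p b)) ∧
      dist (q u) (q w) ≠ dist (p u) (p w) :=
  complete3Tree_remove_edge_flexible_general hn G v h3tree u w huw p hgen ε hε
end

section
/- Let G = (V, E) be a complete 3-tree on n ≥ 3 vertices with ordering v₁,…,vₙ as in the definition; for i ≥ 4 let aᵢ, bᵢ, cᵢ denote the three earlier neighbors of vᵢ in a fixed order. Let p, q : V → EuclideanSpace ℝ (Fin 3) be two maps with dist (p u) (p v) = dist (q u) (q v) for every edge {u,v} ∈ E, with p vⱼ = q vⱼ for j = 1, 2, 3, and suppose that for every i ≥ 4 the determinant of the 3×3 matrix with columns p vᵢ − p aᵢ, p bᵢ − p aᵢ, p cᵢ − p aᵢ is nonzero and has the same sign as the determinant of the matrix with columns q vᵢ − q aᵢ, q bᵢ − q aᵢ, q cᵢ − q aᵢ. Then p = q. -/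
/-!
Induct along the 3-tree ordering. When `vᵢ` is placed, its neighbours `a, b, c` already agree in
`p` and `q`, so `x = p vᵢ` and `y = q vᵢ` are equidistant from `a, b, c`. Then `x - y` is
orthogonal to `b - a` and `c - a`, hence `‖n‖² (x - y) = ⟪n, x - y⟫ n` for the normal
`n = (b - a) × (c - a)`. Pairing this with `(x - a) + (y - a)`, which is orthogonal to `x - y`,
gives `⟪x - a, n⟫² = ⟪y - a, n⟫²`: the two oriented volumes agree up to sign. Equal flips make
them equal, so `⟪n, x - y⟫ = 0` and `x = y`.
-/

open Matrix

theorem cross_dotProduct_self_smul_eq_of_orthogonal {R : Type*} [CommRing R] {d u w : Fin 3 → R}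
    (hu : d ⬝ᵥ u = 0) (hw : d ⬝ᵥ w = 0) :
    ((u ⨯₃ w) ⬝ᵥ (u ⨯₃ w)) • d = ((u ⨯₃ w) ⬝ᵥ d) • (u ⨯₃ w) := by
  have hcross : d ⨯₃ (u ⨯₃ w) = 0 := by
    rw [cross_cross_eq_smul_sub_smul', dotProduct_comm u, hu, hw, zero_smul, zero_smul, sub_zero]
  have h := cross_cross_eq_smul_sub_smul d (u ⨯₃ w) (u ⨯₃ w)
  rw [hcross, LinearMap.map_zero, LinearMap.zero_apply, eq_comm, sub_eq_zero] at h
  rw [← h, dotProduct_comm]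

section

variable {K : Type*} [Field K] [LinearOrder K] [IsStrictOrderedRing K]

theorem sub_dotProduct_sub_eq_zero_of_equidistant {ι : Type*} [Fintype ι] {x y a e : ι → K}
    (ha : (x - a) ⬝ᵥ (x - a) = (y - a) ⬝ᵥ (y - a))
    (he : (x - e) ⬝ᵥ (x - e) = (y - e) ⬝ᵥ (y - e)) :
    (x - y) ⬝ᵥ (e - a) = 0 := by
  simp only [sub_dotProduct, dotProduct_sub, dotProduct_comm e, dotProduct_comm a] at *
  linarith

theorem eq_of_equidistant_of_triple_product_mul_pos {x y a b c : Fin 3 → K}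
    (ha : (x - a) ⬝ᵥ (x - a) = (y - a) ⬝ᵥ (y - a))
    (hb : (x - b) ⬝ᵥ (x - b) = (y - b) ⬝ᵥ (y - b))
    (hc : (x - c) ⬝ᵥ (x - c) = (y - c) ⬝ᵥ (y - c))
    (hside : 0 < (x - a) ⬝ᵥ (b - a) ⨯₃ (c - a) * ((y - a) ⬝ᵥ (b - a) ⨯₃ (c - a))) :
    x = y := by
  set n := (b - a) ⨯₃ (c - a)
  set S := (x - a) ⬝ᵥ n
  set T := (y - a) ⬝ᵥ n
  have hpar : (n ⬝ᵥ n) • (x - y) = (n ⬝ᵥ (x - y)) • n :=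
    cross_dotProduct_self_smul_eq_of_orthogonal
      (sub_dotProduct_sub_eq_zero_of_equidistant ha hb)
      (sub_dotProduct_sub_eq_zero_of_equidistant ha hc)
  have hdiff : n ⬝ᵥ (x - y) = S - T := by
    rw [dotProduct_comm, ← sub_dotProduct, sub_sub_sub_cancel_right]
  have hmid : (x - y) ⬝ᵥ (x - a + (y - a)) = 0 := by
    simp only [sub_dotProduct, dotProduct_add, dotProduct_sub, dotProduct_comm y x,
      dotProduct_comm a] at *
    linarith
  have hsq : (S - T) * (S + T) = 0 := by
    have h := congrArg (· ⬝ᵥ (x - a + (y - a))) hpar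
    simp only [smul_dotProduct, hmid, smul_eq_mul, mul_zero, hdiff] at h
    rw [h, dotProduct_add, dotProduct_comm, dotProduct_comm n]
  have hST : S = T := by
    rcases mul_eq_zero.mp hsq with h | h
    · exact sub_eq_zero.mp h
    · nlinarith
  have hn : n ⬝ᵥ n ≠ 0 := by
    rw [Ne, dotProduct_self_eq_zero]
    rintro hn
    simp [S, hn] at hside
  rw [hdiff, hST, sub_self, zero_smul, smul_eq_zero] at hpar
  exact sub_eq_zero.mp (hpar.resolve_left hn)

end

theorem EuclideanSpace.dist_sq_eq_dotProduct {ι : Type*} [Fintype ι] (x y : EuclideanSpace ℝ ι) :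
    dist x y ^ 2 = (x.ofLp - y.ofLp) ⬝ᵥ (x.ofLp - y.ofLp) := by
  rw [dist_eq_norm, ← real_inner_self_eq_norm_sq, EuclideanSpace.inner_eq_star_dotProduct]
  simp

theorem EuclideanSpace.det_of_columns_eq_triple_product (x u w : EuclideanSpace ℝ (Fin 3)) :
    (Matrix.of fun (r k : Fin 3) => (![x, u, w] k) r).det = x.ofLp ⬝ᵥ u.ofLp ⨯₃ w.ofLp := by
  rw [triple_product_eq_det, ← det_transpose]
  congr 1
  ext r k
  fin_cases r <;> rfl

theorem EuclideanSpace.eq_of_dist_eq_of_det_mul_pos {x y A B C : EuclideanSpace ℝ (Fin 3)}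
    (hA : dist x A = dist y A) (hB : dist x B = dist y B) (hC : dist x C = dist y C)
    (hside : 0 < (Matrix.of fun (r k : Fin 3) => (![x - A, B - A, C - A] k) r).det *
      (Matrix.of fun (r k : Fin 3) => (![y - A, B - A, C - A] k) r).det) :
    x = y := by
  simp only [det_of_columns_eq_triple_product, WithLp.ofLp_sub] at hside
  refine WithLp.ofLp_injective 2 (eq_of_equidistant_of_triple_product_mul_pos ?_ ?_ ?_ hside)
  all_goals simp only [← dist_sq_eq_dotProduct, hA, hB, hC]

theorem complete3Tree_realization_unique_of_flips_general
    {V : Type*} {n : ℕ}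
    (G : SimpleGraph V) (v : Fin n ≃ V) (a b c : Fin n → Fin n)
    (hnb : ∀ i : Fin n, 3 ≤ i.val →
      a i < i ∧ b i < i ∧ c i < i ∧
      a i ≠ b i ∧ a i ≠ c i ∧ b i ≠ c i ∧
      (∀ j : Fin n, j < i →
        (G.Adj (v i) (v j) ↔ j = a i ∨ j = b i ∨ j = c i)) ∧
      G.Adj (v (a i)) (v (b i)) ∧ G.Adj (v (a i)) (v (c i)) ∧
      G.Adj (v (b i)) (v (c i)))
    (p q : V → EuclideanSpace ℝ (Fin 3))
    (hlen : ∀ x y : V, G.Adj x y → dist (p x) (p y) = dist (q x) (q y))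
    (hbase : ∀ j : Fin n, j.val < 3 → p (v j) = q (v j))
    (hflip : ∀ i : Fin n, 3 ≤ i.val →
      0 < (Matrix.of fun (r k : Fin 3) =>
            (![p (v i) - p (v (a i)), p (v (b i)) - p (v (a i)),
               p (v (c i)) - p (v (a i))] k) r).det *
          (Matrix.of fun (r k : Fin 3) =>
            (![q (v i) - q (v (a i)), q (v (b i)) - q (v (a i)),
               q (v (c i)) - q (v (a i))] k) r).det) :
    p = q := by
  have hvert : ∀ i, p (v i) = q (v i) := by
    intro i
    induction i using WellFoundedLT.induction with
    | _ i ih =>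
      rcases lt_or_ge i.val 3 with hi | hi
      · exact hbase i hi
      obtain ⟨ha, hb, hc, -, -, -, hadj, -, -, -⟩ := hnb i hi
      have hside := hflip i hi
      rw [← ih _ ha, ← ih _ hb, ← ih _ hc] at hside
      refine EuclideanSpace.eq_of_dist_eq_of_det_mul_pos ?_ ?_ ?_ hside
      · rw [hlen _ _ ((hadj _ ha).mpr (.inl rfl)), ih _ ha]
      · rw [hlen _ _ ((hadj _ hb).mpr (.inr (.inl rfl))), ih _ hb]
      · rw [hlen _ _ ((hadj _ hc).mpr (.inr (.inr rfl))), ih _ hc]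
  funext z
  simpa using hvert (v.symm z)

/-- A realization of a complete 3-tree linkage is uniquely determined by its
edge lengths, the placement of the base triangle, and the choice of flip (the
orientation sign of each sequentially placed tetrahedron). Here `v : Fin n ≃ V`
is the 3-tree ordering and `a i`, `b i`, `c i` are the three earlier neighbors
of the `i`-th vertex, in a fixed order. -/
theorem complete3Tree_realization_unique_of_flips
    {V : Type*} [Fintype V] {n : ℕ} (hn : 3 ≤ n)
    (G : SimpleGraph V) (v : Fin n ≃ V) (a b c : Fin n → Fin n)
    (htri : ∀ i j : Fin n, i.val < 3 → j.val < 3 → i ≠ j → G.Adj (v i) (v j))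
    (hnb : ∀ i : Fin n, 3 ≤ i.val →
      a i < i ∧ b i < i ∧ c i < i ∧
      a i ≠ b i ∧ a i ≠ c i ∧ b i ≠ c i ∧
      (∀ j : Fin n, j < i →
        (G.Adj (v i) (v j) ↔ j = a i ∨ j = b i ∨ j = c i)) ∧
      G.Adj (v (a i)) (v (b i)) ∧ G.Adj (v (a i)) (v (c i)) ∧
      G.Adj (v (b i)) (v (c i)))
    (p q : V → EuclideanSpace ℝ (Fin 3))
    (hlen : ∀ x y : V, G.Adj x y → dist (p x) (p y) = dist (q x) (q y))
    (hbase : ∀ j : Fin n, j.val < 3 → p (v j) = q (v j))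
    (hflip : ∀ i : Fin n, 3 ≤ i.val →
      0 < (Matrix.of fun (r k : Fin 3) =>
            (![p (v i) - p (v (a i)), p (v (b i)) - p (v (a i)),
               p (v (c i)) - p (v (a i))] k) r).det *
          (Matrix.of fun (r k : Fin 3) =>
            (![q (v i) - q (v (a i)), q (v (b i)) - q (v (a i)),
               q (v (c i)) - q (v (a i))] k) r).det) :
    p = q :=
  complete3Tree_realization_unique_of_flips_general G v a b c hnb p q hlen hbase hflip
end
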